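/- arXiv:2404.09276 — 6 statements merged into one kernel-verified Lean document; each statement's English description precedes it below -/
import Mathlib

section
/- For real matrices A, C of the same size m×n, and indices i, j with 1 ≤ i, j and i+j-1 ≤ min(m,n), the (i+j-1)-th largest singular value of A·Cᵀ is at most the product of the i-th largest singular value of A and the j-th largest singular value of C. -/
open Matrix
open scoped Matrix.Norms.L2Operator

/-- The `i`-th largest singular value (1-indexed) of a real matrix,
defined as the `i`-th largest among the square roots of the eigenvalues of `A * Aᴴ`. -/
noncomputable def sval {m n : ℕ} (A : Matrix (Fin m) (Fin n) ℝ) (i : ℕ) : ℝ :=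
  (List.insertionSort (· ≥ ·)
    (List.ofFn fun j : Fin m =>
      Real.sqrt ((Matrix.isHermitian_mul_conjTranspose_self A).eigenvalues j))).getD (i - 1) 0

open Module

lemma perm_ofFn_comp {α : Type*} {m : ℕ} (f : Fin m → α) (e : Equiv.Perm (Fin m)) :
    (List.ofFn (f ∘ e)).Perm (List.ofFn f) := by
  rw [List.ofFn_eq_map, List.ofFn_eq_map]
  have h1 : List.map (f ∘ e) (List.finRange m) = List.map f (List.map e (List.finRange m)) := by
    simp [List.map_map]
  rw [h1]
  refine List.Perm.map f ?_
  refine List.perm_of_nodup_nodup_toFinset_eq ?_ (List.nodup_finRange m) ?_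
  · exact (List.nodup_finRange m).map e.injective
  · ext x
    simp only [List.mem_toFinset, List.mem_map, List.mem_finRange, true_and, iff_true]
    exact ⟨e.symm x, by simp⟩

lemma insertionSort_ofFn_eq {m : ℕ} (f : Fin m → ℝ) (e : Equiv.Perm (Fin m))
    (he : Antitone (f ∘ e)) :
    List.insertionSort (· ≥ ·) (List.ofFn f) = List.ofFn (f ∘ e) := by
  refine (fun h1 h2 h3 => List.Perm.eq_of_pairwise' (r := (· ≥ ·)) h2 h3 h1) ?_ ?_ ?_
  · exact (List.perm_insertionSort _ _).trans (perm_ofFn_comp f e).symm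
  · exact List.pairwise_insertionSort _ _
  · rw [List.pairwise_ofFn]
    intro i j hij
    exact he hij.le

/-- sorted -/
lemma exists_antitone_sval {m n : ℕ} (A : Matrix (Fin m) (Fin n) ℝ) :
    ∃ e : Equiv.Perm (Fin m),
      Antitone ((fun i => Real.sqrt ((Matrix.isHermitian_mul_conjTranspose_self A).eigenvalues i)) ∘ e) ∧
      ∀ k : Fin m, sval A (k.1 + 1) =
        Real.sqrt ((Matrix.isHermitian_mul_conjTranspose_self A).eigenvalues (e k)) := by
  set f : Fin m → ℝ := fun i => Real.sqrt ((Matrix.isHermitian_mul_conjTranspose_self A).eigenvalues i) with hf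
  refine ⟨Tuple.sort (fun i => -f i), ?_, ?_⟩
  · intro a b hab
    have := Tuple.monotone_sort (fun i => -f i) hab
    simpa using this
  · intro k
    have hA : Antitone (f ∘ Tuple.sort (fun i => -f i)) := by
      intro a b hab
      have := Tuple.monotone_sort (fun i => -f i) hab
      simpa using this
    rw [sval, insertionSort_ofFn_eq f _ hA]
    simp only [Nat.add_sub_cancel]
    rw [List.getD_eq_getElem?_getD, List.getElem?_ofFn]
    simp [List.ofFnNthVal, k.isLt]
    rfl


lemma toEuclideanLin_mul {l m n : ℕ} (M : Matrix (Fin l) (Fin m) ℝ) (N : Matrix (Fin m) (Fin n) ℝ)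
    (x : EuclideanSpace ℝ (Fin n)) :
    toEuclideanLin (M * N) x = toEuclideanLin M (toEuclideanLin N x) := by
  simp [Matrix.toEuclideanLin_apply, Matrix.mulVec_mulVec]

lemma sval_setup {m n : ℕ} (A : Matrix (Fin m) (Fin n) ℝ) :
    ∃ (σ : Fin m → ℝ) (u : OrthonormalBasis (Fin m) ℝ (EuclideanSpace ℝ (Fin m))),
      Antitone σ ∧ (∀ i, 0 ≤ σ i) ∧
      (∀ i, toEuclideanLin A (toEuclideanLin Aᵀ (u i)) = (σ i ^ 2) • u i) ∧
      (∀ k : Fin m, sval A (k.1 + 1) = σ k) := by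
  obtain ⟨e, hanti, hsval⟩ := exists_antitone_sval A
  set hH := Matrix.isHermitian_mul_conjTranspose_self A with hHdef
  set f : Fin m → ℝ := fun i => Real.sqrt (hH.eigenvalues i) with hfdef
  refine ⟨f ∘ e, hH.eigenvectorBasis.reindex e.symm, hanti, fun i => Real.sqrt_nonneg _, ?_, ?_⟩
  · intro i
    have hb : (hH.eigenvectorBasis.reindex e.symm) i = hH.eigenvectorBasis (e i) := by
      simp [OrthonormalBasis.reindex_apply]
    rw [hb]
    have h := hH.mulVec_eigenvectorBasis (e i)
    have hnn : 0 ≤ hH.eigenvalues (e i) :=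
      (Matrix.posSemidef_self_mul_conjTranspose A).eigenvalues_nonneg (e i)
    have hsq : (f ∘ e) i ^ 2 = hH.eigenvalues (e i) := Real.sq_sqrt hnn
    rw [← toEuclideanLin_mul]
    have hAH : Aᴴ = Aᵀ := Matrix.conjTranspose_eq_transpose_of_trivial A
    rw [← hAH, Matrix.toEuclideanLin_apply, h, hsq]
    simp
  · intro k
    exact hsval k


lemma rank_eq_finrank_range_toEuclideanLin {m n : ℕ} (X : Matrix (Fin m) (Fin n) ℝ) :
    X.rank = finrank ℝ (LinearMap.range (toEuclideanLin X)) := by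
  have h : toEuclideanLin X =
      ((WithLp.linearEquiv 2 ℝ (Fin m → ℝ)).symm.toLinearMap.comp
        (X.mulVecLin.comp (WithLp.linearEquiv 2 ℝ (Fin n → ℝ)).toLinearMap)) := by
    ext x
    simp [Matrix.toEuclideanLin_apply, Matrix.mulVecLin_apply]
  rw [Matrix.rank, h]
  rw [LinearMap.range_comp, LinearMap.range_comp_of_range_eq_top _ (LinearEquiv.range _)]
  exact ((WithLp.linearEquiv 2 ℝ (Fin m → ℝ)).symm.finrank_map_eq _).symm

lemma finrank_ker_toEuclideanLin {m n : ℕ} (X : Matrix (Fin m) (Fin n) ℝ) :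
    X.rank + finrank ℝ (LinearMap.ker (toEuclideanLin X)) = n := by
  rw [rank_eq_finrank_range_toEuclideanLin]
  have := LinearMap.finrank_range_add_finrank_ker (toEuclideanLin X)
  rw [this]
  simp [finrank_euclideanSpace]

lemma matrix_rank_add_le {m n : ℕ} (X Y : Matrix (Fin m) (Fin n) ℝ) :
    (X + Y).rank ≤ X.rank + Y.rank := by
  have h : LinearMap.range (X + Y).mulVecLin ≤
      LinearMap.range X.mulVecLin ⊔ LinearMap.range Y.mulVecLin := by
    rintro _ ⟨v, rfl⟩
    rw [Matrix.mulVecLin_add]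
    exact Submodule.mem_sup.2 ⟨X.mulVecLin v, ⟨v, rfl⟩, Y.mulVecLin v, ⟨v, rfl⟩, rfl⟩
  calc (X + Y).rank ≤ finrank ℝ ↥(LinearMap.range X.mulVecLin ⊔ LinearMap.range Y.mulVecLin) :=
        Submodule.finrank_mono h
    _ ≤ X.rank + Y.rank := by
        have := Submodule.finrank_sup_add_finrank_inf_eq
          (LinearMap.range X.mulVecLin) (LinearMap.range Y.mulVecLin)
        rw [Matrix.rank, Matrix.rank]
        omega


lemma inner_toEuclideanLin {m n : ℕ} (A : Matrix (Fin m) (Fin n) ℝ)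
    (x : EuclideanSpace ℝ (Fin n)) (y : EuclideanSpace ℝ (Fin m)) :
    inner (𝕜 := ℝ) x (toEuclideanLin Aᵀ y) = inner (𝕜 := ℝ) (toEuclideanLin A x) y := by
  rw [← Matrix.conjTranspose_eq_transpose_of_trivial,
    Matrix.toEuclideanLin_conjTranspose_eq_adjoint, LinearMap.adjoint_inner_right]

lemma inner_w {m n : ℕ} {A : Matrix (Fin m) (Fin n) ℝ} {σ : Fin m → ℝ}
    {u : OrthonormalBasis (Fin m) ℝ (EuclideanSpace ℝ (Fin m))}
    (hT : ∀ i, toEuclideanLin A (toEuclideanLin Aᵀ (u i)) = (σ i ^ 2) • u i) (i j : Fin m) :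
    inner (𝕜 := ℝ) (toEuclideanLin Aᵀ (u i)) (toEuclideanLin Aᵀ (u j)) =
      if i = j then σ i ^ 2 else 0 := by
  rw [inner_toEuclideanLin, hT i, real_inner_smul_left,
    orthonormal_iff_ite.mp u.orthonormal i j]
  split <;> simp

lemma sval_le_of_rank_lt {m n k : ℕ} (A X : Matrix (Fin m) (Fin n) ℝ)
    (hk1 : 1 ≤ k) (hkm : k ≤ m) (hX : X.rank < k) : sval A k ≤ ‖A - X‖ := by
  obtain ⟨σ, u, hanti, hnn, hT, hsval⟩ := sval_setup A
  have hm : 0 < m := lt_of_lt_of_le hk1 hkm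
  set κ : Fin m := ⟨k - 1, by omega⟩ with hκ
  have hsv : sval A k = σ κ := by
    have := hsval κ
    simpa [hκ, Nat.sub_add_cancel hk1] using this
  rw [hsv]
  rcases le_or_gt (σ κ) 0 with hσ | hσ
  · exact le_trans hσ (norm_nonneg _)
  -- positive case
  set T := toEuclideanLin A with hTdef
  set T' := toEuclideanLin Aᵀ with hT'def
  have hcast : ∀ i : Fin k, (Fin.castLE hkm i : Fin m) ≤ κ := by
    intro i
    simp only [Fin.le_def, Fin.coe_castLE, hκ]
    omega
  have hσpos : ∀ i : Fin k, 0 < σ (Fin.castLE hkm i) :=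
    fun i => lt_of_lt_of_le hσ (hanti (hcast i))
  set v : Fin k → EuclideanSpace ℝ (Fin n) :=
    fun i => (σ (Fin.castLE hkm i))⁻¹ • T' (u (Fin.castLE hkm i)) with hv
  have hvon : Orthonormal ℝ v := by
    rw [orthonormal_iff_ite]
    intro i j
    simp only [hv, real_inner_smul_left, real_inner_smul_right]
    rw [inner_w hT]
    by_cases hij : i = j
    · subst hij
      have hne0 := (hσpos i).ne'
      simp only [if_true, eq_self_iff_true, ite_true]
      field_simp
    · have : Fin.castLE hkm i ≠ Fin.castLE hkm j := by
        simpa [Fin.ext_iff] using fun h => hij (Fin.ext h)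
      simp [hij, if_neg this]
  have hTv : ∀ i : Fin k, T (v i) = σ (Fin.castLE hkm i) • u (Fin.castLE hkm i) := by
    intro i
    show T ((σ (Fin.castLE hkm i))⁻¹ • T' (u (Fin.castLE hkm i))) = _
    rw [_root_.map_smul, hT, smul_smul, pow_two, ← mul_assoc,
      inv_mul_cancel₀ (hσpos i).ne', one_mul]
  -- dimension counting
  set V := Submodule.span ℝ (Set.range v) with hV
  set K := LinearMap.ker (toEuclideanLin X) with hK
  have hVdim : finrank ℝ V = k := by
    rw [hV, finrank_span_eq_card hvon.linearIndependent, Fintype.card_fin]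
  have hKdim : X.rank + finrank ℝ K = n := finrank_ker_toEuclideanLin X
  have hinf : 0 < finrank ℝ (V ⊓ K : Submodule ℝ (EuclideanSpace ℝ (Fin n))) := by
    have hsum := Submodule.finrank_sup_add_finrank_inf_eq V K
    have hle : finrank ℝ (V ⊔ K : Submodule ℝ (EuclideanSpace ℝ (Fin n))) ≤ n := by
      have := Submodule.finrank_le (V ⊔ K)
      simpa [finrank_euclideanSpace] using this
    omega
  have hne : (V ⊓ K : Submodule ℝ (EuclideanSpace ℝ (Fin n))) ≠ ⊥ := by
    intro hbot
    rw [hbot] at hinf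
    simp at hinf
  obtain ⟨x, hxmem, hxne⟩ := Submodule.exists_mem_ne_zero_of_ne_bot hne
  obtain ⟨hxV, hxK⟩ := Submodule.mem_inf.mp hxmem
  obtain ⟨c, hc⟩ := (Submodule.mem_span_range_iff_exists_fun ℝ).mp hxV
  -- norms
  have hxnorm : (‖x‖ : ℝ) ^ 2 = ∑ i, c i ^ 2 := by
    rw [← hc, ← real_inner_self_eq_norm_sq]
    rw [hvon.inner_sum c c Finset.univ]
    simp [pow_two]
  have hTx : T x = ∑ i, (c i * σ (Fin.castLE hkm i)) • u (Fin.castLE hkm i) := by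
    rw [← hc, map_sum]
    refine Finset.sum_congr rfl fun i _ => ?_
    rw [_root_.map_smul, hTv i, smul_smul]
  have huon : Orthonormal ℝ (fun i : Fin k => u (Fin.castLE hkm i)) :=
    u.orthonormal.comp _ (Fin.castLE_injective hkm)
  have hTxnorm : ‖T x‖ ^ 2 = ∑ i, (c i * σ (Fin.castLE hkm i)) ^ 2 := by
    rw [hTx, ← real_inner_self_eq_norm_sq,
      huon.inner_sum (fun i => c i * σ (Fin.castLE hkm i)) (fun i => c i * σ (Fin.castLE hkm i))
        Finset.univ]
    simp [pow_two]
  have hxpos : 0 < ‖x‖ := norm_pos_iff.mpr hxne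
  have hlow : (σ κ) ^ 2 * ‖x‖ ^ 2 ≤ ‖T x‖ ^ 2 := by
    rw [hTxnorm, hxnorm, Finset.mul_sum]
    refine Finset.sum_le_sum fun i _ => ?_
    rw [mul_pow]
    rw [mul_comm ((σ κ)^2)]
    refine mul_le_mul_of_nonneg_left ?_ (sq_nonneg _)
    exact pow_le_pow_left₀ (hnn κ) (hanti (hcast i)) 2
  have hker : toEuclideanLin (A - X) x = T x := by
    rw [map_sub]
    simp only [LinearMap.sub_apply]
    have : toEuclideanLin X x = 0 := hxK
    rw [this, sub_zero, hTdef]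
  have hbound : ‖T x‖ ≤ ‖A - X‖ * ‖x‖ := by
    rw [← hker, Matrix.l2_opNorm_def]
    exact ((Matrix.toEuclideanLin.trans LinearMap.toContinuousLinearMap) (A - X)).le_opNorm x
  have hfin : σ κ * ‖x‖ ≤ ‖A - X‖ * ‖x‖ := by
    refine le_trans ?_ hbound
    have h1 : (σ κ * ‖x‖) ^ 2 ≤ ‖T x‖ ^ 2 := by rw [mul_pow]; exact hlow
    have h2 : 0 ≤ σ κ * ‖x‖ := mul_nonneg (hnn κ) (norm_nonneg _)
    have h3 := Real.sqrt_le_sqrt h1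
    rwa [Real.sqrt_sq h2, Real.sqrt_sq (norm_nonneg _)] at h3
  exact le_of_mul_le_mul_right hfin hxpos


set_option maxHeartbeats 1000000 in
lemma exists_approx {m n k : ℕ} (A : Matrix (Fin m) (Fin n) ℝ) (hk1 : 1 ≤ k) (hkm : k ≤ m) :
    ∃ X : Matrix (Fin m) (Fin n) ℝ, X.rank < k ∧ ‖A - X‖ ≤ sval A k := by
  classical
  obtain ⟨σ, u, hanti, hnn, hT, hsval⟩ := sval_setup A
  have hm : 0 < m := lt_of_lt_of_le hk1 hkm
  set κ : Fin m := ⟨k - 1, by omega⟩ with hκ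
  have hsv : sval A k = σ κ := by
    have := hsval κ
    simpa [hκ, Nat.sub_add_cancel hk1] using this
  set T := toEuclideanLin A with hTdef
  set T' := toEuclideanLin Aᵀ with hT'def
  set s : Finset (Fin m) := Finset.univ.filter (fun i => i.1 < k - 1) with hs
  set L : EuclideanSpace ℝ (Fin n) →ₗ[ℝ] EuclideanSpace ℝ (Fin m) :=
    ∑ i ∈ s, LinearMap.smulRight
      (((innerSL ℝ (u i)).toLinearMap).comp T) (u i) with hL
  have hLapply : ∀ x, L x = ∑ i ∈ s, (inner (𝕜 := ℝ) (u i) (T x)) • u i := by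
    intro x
    rw [hL]
    simp only [LinearMap.sum_apply, LinearMap.smulRight_apply, LinearMap.comp_apply,
      ContinuousLinearMap.coe_coe, innerSL_apply_apply]
  set X : Matrix (Fin m) (Fin n) ℝ := Matrix.toEuclideanLin.symm L with hX
  have hXL : toEuclideanLin X = L := by rw [hX, LinearEquiv.apply_symm_apply]
  clear_value L X
  clear hL hX
  refine ⟨X, ?_, ?_⟩
  · -- rank bound
    rw [rank_eq_finrank_range_toEuclideanLin, hXL]
    have hkm' : k - 1 ≤ m := by omega
    set g : Fin (k-1) → EuclideanSpace ℝ (Fin m) := fun i => u (Fin.castLE hkm' i) with hg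
    have hrange : LinearMap.range L ≤ Submodule.span ℝ (Set.range g) := by
      rintro _ ⟨x, rfl⟩
      rw [hLapply]
      refine Submodule.sum_mem _ fun i hi => Submodule.smul_mem _ _ ?_
      have hilt : i.1 < k - 1 := by
        rw [hs] at hi
        simpa using hi
      have : u i = g ⟨i.1, hilt⟩ := by
        rw [hg]
        congr 1
      rw [this]
      exact Submodule.subset_span ⟨⟨i.1, hilt⟩, rfl⟩
    have h2 : finrank ℝ (Submodule.span ℝ (Set.range g)) ≤ k - 1 := by
      have h := LinearMap.finrank_range_le (Finsupp.linearCombination ℝ g)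
      rw [Finsupp.range_linearCombination] at h
      simpa using h
    have := Submodule.finrank_mono hrange
    omega
  · -- norm bound
    rw [hsv, Matrix.l2_opNorm_def]
    refine ContinuousLinearMap.opNorm_le_bound _ (hnn κ) fun x => ?_
    have happ : ((Matrix.toEuclideanLin.trans LinearMap.toContinuousLinearMap) (A - X)) x
        = T x - L x := by
      show toEuclideanLin (A - X) x = _
      rw [map_sub]
      simp only [LinearMap.sub_apply]
      rw [hXL, hTdef]
    rw [happ]
    set y := T x - L x with hy
    -- coordinates
    set d : Fin m → ℝ := fun i => if i ∈ s then 0 else inner (𝕜 := ℝ) (u i) (T x) with hd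
    have hinnerL : ∀ i, inner (𝕜 := ℝ) (u i) (L x) =
        if i ∈ s then inner (𝕜 := ℝ) (u i) (T x) else 0 := by
      intro i
      rw [hLapply, inner_sum]
      have : ∀ j ∈ s, inner (𝕜 := ℝ) (u i) ((inner (𝕜 := ℝ) (u j) (T x)) • u j)
          = if i = j then inner (𝕜 := ℝ) (u j) (T x) else 0 := by
        intro j _
        rw [real_inner_smul_right, orthonormal_iff_ite.mp u.orthonormal i j]
        split <;> simp
      rw [Finset.sum_congr rfl this, Finset.sum_ite_eq]
    have hrepr : ∀ i, u.repr y i = d i := by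
      intro i
      rw [u.repr_apply_apply, hy, inner_sub_right, hinnerL, hd]
      by_cases his : i ∈ s
      · simp only [if_pos his, sub_self]
      · simp only [if_neg his, sub_zero]
    have hyd : y = ∑ i, d i • u i := by
      conv_lhs => rw [← u.sum_repr y]
      exact Finset.sum_congr rfl fun i _ => by rw [hrepr]
    have hynorm : ‖y‖ ^ 2 = ∑ i, d i ^ 2 := by
      rw [hyd, ← real_inner_self_eq_norm_sq, u.orthonormal.inner_sum d d Finset.univ]
      simp [pow_two]
    -- the orthonormal right singular family
    set v' : {i : Fin m // σ i ≠ 0} → EuclideanSpace ℝ (Fin n) :=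
      fun p => (σ p.1)⁻¹ • T' (u p.1) with hv'
    have hσpos' : ∀ p : {i : Fin m // σ i ≠ 0}, 0 < σ p.1 :=
      fun p => lt_of_le_of_ne (hnn p.1) (Ne.symm p.2)
    have hv'on : Orthonormal ℝ v' := by
      rw [orthonormal_iff_ite]
      intro p q
      rw [hv', real_inner_smul_left, real_inner_smul_right]
      rw [show inner (𝕜 := ℝ) (T' (u p.1)) (T' (u q.1)) = if p.1 = q.1 then σ p.1 ^ 2 else 0
        from inner_w hT p.1 q.1]
      by_cases hpq : p = q
      · subst hpq
        have hne0 := (hσpos' p).ne'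
        simp only [if_true, eq_self_iff_true, ite_true]
        field_simp
      · have h1 : p.1 ≠ q.1 := fun h => hpq (Subtype.ext h)
        simp [hpq, if_neg h1]
    have hT'zero : ∀ i : Fin m, σ i = 0 → T' (u i) = 0 := by
      intro i hσi
      have h := inner_w hT i i
      rw [if_pos rfl, hσi] at h
      have : inner (𝕜 := ℝ) (T' (u i)) (T' (u i)) = 0 := by rw [h]; ring
      exact inner_self_eq_zero.mp this
    have hTx_inner : ∀ i : Fin m, inner (𝕜 := ℝ) (u i) (T x) = inner (𝕜 := ℝ) (T' (u i)) x := by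
      intro i
      calc inner (𝕜 := ℝ) (u i) (T x) = inner (𝕜 := ℝ) (T x) (u i) := real_inner_comm _ _
        _ = inner (𝕜 := ℝ) x (T' (u i)) := (inner_toEuclideanLin A x (u i)).symm
        _ = inner (𝕜 := ℝ) (T' (u i)) x := real_inner_comm _ _
    -- bound on the coordinates sum
    set F : Finset (Fin m) := Finset.univ.filter (fun i => i ∉ s ∧ σ i ≠ 0) with hF
    have hsum1 : ∑ i, d i ^ 2 = ∑ i ∈ F, d i ^ 2 := by
      symm
      refine Finset.sum_subset (Finset.filter_subset _ _ |>.trans (le_refl _)) ?_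
      intro i _ hiF
      rw [hF, Finset.mem_filter] at hiF
      push_neg at hiF
      by_cases his : i ∈ s
      · simp [hd, his]
      · have hσi : σ i = 0 := hiF (Finset.mem_univ i) his
        have : d i = inner (𝕜 := ℝ) (u i) (T x) := by simp [hd, his]
        rw [this, hTx_inner, hT'zero i hσi]
        simp
    have hsum2 : ∑ i ∈ F, d i ^ 2
        = ∑ p ∈ F.subtype (fun i => σ i ≠ 0), d p.1 ^ 2 := by
      have h := Finset.sum_subtype_eq_sum_filter (f := fun i => d i ^ 2)
        (p := fun i => σ i ≠ 0) (s := F)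
      rw [h]
      congr 1
      rw [hF]
      ext i
      simp only [Finset.mem_filter, Finset.mem_univ, true_and]
      tauto
    have hκle : ∀ i : Fin m, i ∉ s → σ i ≤ σ κ := by
      intro i his
      refine hanti ?_
      rw [hs] at his
      simp only [Finset.mem_filter, Finset.mem_univ, true_and, not_lt] at his
      rw [Fin.le_def]
      exact his
    have hdp : ∀ p : {i : Fin m // σ i ≠ 0}, p.1 ∉ s →
        d p.1 ^ 2 = σ p.1 ^ 2 * inner (𝕜 := ℝ) (v' p) x ^ 2 := by
      intro p hps
      have h1 : d p.1 = inner (𝕜 := ℝ) (T' (u p.1)) x := by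
        rw [hd]
        simp only [if_neg hps]
        exact hTx_inner p.1
      have h2 : T' (u p.1) = σ p.1 • v' p := by
        rw [hv', smul_smul, mul_inv_cancel₀ p.2, one_smul]
      rw [h1, h2, real_inner_smul_left, mul_pow]
    have hbound : ∑ i, d i ^ 2 ≤ σ κ ^ 2 * ‖x‖ ^ 2 := by
      rw [hsum1, hsum2]
      have hle2 : ∀ p ∈ F.subtype (fun i => σ i ≠ 0),
          d p.1 ^ 2 ≤ σ κ ^ 2 * inner (𝕜 := ℝ) (v' p) x ^ 2 := by
        intro p hp
        have hpF : p.1 ∈ F := Finset.mem_subtype.mp hp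
        have hps : p.1 ∉ s := by
          rw [hF, Finset.mem_filter] at hpF
          exact hpF.2.1
        rw [hdp p hps]
        refine mul_le_mul_of_nonneg_right ?_ (sq_nonneg _)
        exact pow_le_pow_left₀ (hnn p.1) (hκle p.1 hps) 2
      calc ∑ p ∈ F.subtype (fun i => σ i ≠ 0), d p.1 ^ 2
          ≤ ∑ p ∈ F.subtype (fun i => σ i ≠ 0), σ κ ^ 2 * inner (𝕜 := ℝ) (v' p) x ^ 2 :=
            Finset.sum_le_sum hle2
        _ = σ κ ^ 2 * ∑ p ∈ F.subtype (fun i => σ i ≠ 0), inner (𝕜 := ℝ) (v' p) x ^ 2 := by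
            rw [Finset.mul_sum]
        _ ≤ σ κ ^ 2 * ‖x‖ ^ 2 := by
            refine mul_le_mul_of_nonneg_left ?_ (sq_nonneg _)
            have hb := Orthonormal.sum_inner_products_le x hv'on
              (s := F.subtype (fun i => σ i ≠ 0))
            refine le_trans (le_of_eq ?_) hb
            refine Finset.sum_congr rfl fun p _ => ?_
            rw [Real.norm_eq_abs, sq_abs]
    have hfin : ‖y‖ ^ 2 ≤ (σ κ * ‖x‖) ^ 2 := by
      rw [hynorm, mul_pow]
      exact hbound
    have h3 := Real.sqrt_le_sqrt hfin
    rwa [Real.sqrt_sq (norm_nonneg _), Real.sqrt_sq (mul_nonneg (hnn κ) (norm_nonneg _))] at h3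


lemma sval_nonneg {m n : ℕ} (A : Matrix (Fin m) (Fin n) ℝ) (i : ℕ) : 0 ≤ sval A i := by
  rw [sval, List.getD_eq_getElem?_getD]
  rcases h : (List.insertionSort (· ≥ ·)
    (List.ofFn fun j : Fin m =>
      Real.sqrt ((Matrix.isHermitian_mul_conjTranspose_self A).eigenvalues j)))[i-1]? with _ | x
  · simp
  · simp only [Option.getD_some]
    have hx := List.mem_of_getElem? h
    have hx2 := (List.perm_insertionSort (· ≥ ·) _).mem_iff.mp hx
    rw [List.mem_ofFn] at hx2
    obtain ⟨j, rfl⟩ := hx2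
    exact Real.sqrt_nonneg _

theorem stmt0 {m n : ℕ} (A C : Matrix (Fin m) (Fin n) ℝ) (i j : ℕ)
    (hi : 1 ≤ i) (hj : 1 ≤ j) (hij : i + j - 1 ≤ min m n) :
    sval (A * Cᵀ) (i + j - 1) ≤ sval A i * sval C j := by
  have hmn : i + j - 1 ≤ m := le_trans hij (min_le_left _ _)
  have him : i ≤ m := by omega
  have hjm : j ≤ m := by omega
  obtain ⟨X, hXrank, hXnorm⟩ := exists_approx A hi him
  obtain ⟨Y, hYrank, hYnorm⟩ := exists_approx C hj hjm
  set Z : Matrix (Fin m) (Fin m) ℝ := X * Cᵀ + (A - X) * Yᵀ with hZ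
  have hZrank : Z.rank < i + j - 1 := by
    have h1 : Z.rank ≤ (X * Cᵀ).rank + ((A - X) * Yᵀ).rank := matrix_rank_add_le _ _
    have h2 : (X * Cᵀ).rank ≤ X.rank := Matrix.rank_mul_le_left _ _
    have h3 : ((A - X) * Yᵀ).rank ≤ Yᵀ.rank := Matrix.rank_mul_le_right _ _
    have h4 : Yᵀ.rank = Y.rank := Y.rank_transpose
    omega
  have key := sval_le_of_rank_lt (A * Cᵀ) Z (by omega) hmn hZrank
  have heq : A * Cᵀ - Z = (A - X) * (C - Y)ᵀ := by
    rw [hZ, Matrix.transpose_sub]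
    simp only [Matrix.sub_mul, Matrix.mul_sub]
    abel
  calc sval (A * Cᵀ) (i + j - 1) ≤ ‖A * Cᵀ - Z‖ := key
    _ = ‖(A - X) * (C - Y)ᵀ‖ := by rw [heq]
    _ ≤ ‖A - X‖ * ‖(C - Y)ᵀ‖ := Matrix.l2_opNorm_mul _ _
    _ = ‖A - X‖ * ‖C - Y‖ := by
        rw [← Matrix.conjTranspose_eq_transpose_of_trivial, Matrix.l2_opNorm_conjTranspose]
    _ ≤ sval A i * sval C j :=
        mul_le_mul hXnorm hYnorm (norm_nonneg _) (le_trans (norm_nonneg _) hXnorm)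
end

section
/- Let A ∈ ℝ^{m×n}, Q ∈ ℝ^{m×l} with orthonormal columns, l ≤ min(m,n), and 0 < α ≤ σ_l(AAᵀ)/2. Then for every i ≤ l, σ_i((AAᵀ - αI)Q) + α ≤ σ_i(AAᵀ). -/
open Matrix
open scoped Matrix.Norms.L2Operator

namespace SvalAux


variable {m : ℕ}

lemma ofFn_comp_perm (f : Fin m → ℝ) (σ : Equiv.Perm (Fin m)) :
    (List.ofFn (f ∘ σ)).Perm (List.ofFn f) := by
  rw [List.ofFn_eq_map, List.ofFn_eq_map]
  have h1 : ((List.finRange m).map (σ : Fin m → Fin m)).Perm (List.finRange m) := by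
    apply List.perm_of_nodup_nodup_toFinset_eq
    · exact (List.nodup_finRange m).map σ.injective
    · exact List.nodup_finRange m
    · ext x
      constructor
      · intro _
        simp [List.mem_finRange]
      · intro _
        simp only [List.mem_toFinset, List.mem_map]
        exact ⟨σ.symm x, List.mem_finRange _, by simp⟩
  have h2 : (List.finRange m).map (f ∘ σ) = ((List.finRange m).map (σ : Fin m → Fin m)).map f := by
    rw [List.map_map]
  rw [h2]
  exact h1.map f

lemma sort_getD {f g : Fin m → ℝ} (σ : Equiv.Perm (Fin m)) (hg : g = f ∘ σ)
    (hmono : Antitone g) (k : Fin m) :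
    (List.insertionSort (· ≥ ·) (List.ofFn f)).getD k 0 = g k := by
  have hperm : (List.ofFn g).Perm (List.ofFn f) := hg ▸ ofFn_comp_perm f σ
  have heq : List.insertionSort (· ≥ ·) (List.ofFn f) = List.ofFn g := by
    apply List.Perm.eq_of_pairwise' (r := (· ≥ ·)) ?_ ?_
      ((List.perm_insertionSort _ _).trans hperm.symm)
    · exact List.pairwise_insertionSort _ _
    · exact List.pairwise_ofFn.2 fun i j hij => hmono hij.le
  rw [heq, List.getD_eq_getElem _ _ (by simp [k.isLt]), List.getElem_ofFn]



variable {m p : ℕ}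

lemma conj_ray (M : Matrix (Fin m) (Fin p) ℝ) (N : Matrix (Fin p) (Fin p) ℝ)
    (x : Fin m → ℝ) :
    x ⬝ᵥ (M * N * Mᵀ) *ᵥ x = (Mᵀ *ᵥ x) ⬝ᵥ N *ᵥ (Mᵀ *ᵥ x) := by
  rw [← mulVec_mulVec, ← mulVec_mulVec, dotProduct_mulVec, mulVec_transpose]

lemma dot_diag (c y : Fin m → ℝ) :
    y ⬝ᵥ (diagonal c) *ᵥ y = ∑ j, c j * y j ^ 2 := by
  simp only [dotProduct, mulVec_diagonal]
  exact Finset.sum_congr rfl fun j _ => by ring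

lemma ray_eq (U : Matrix (Fin m) (Fin m) ℝ) (c : Fin m → ℝ) (x : Fin m → ℝ) :
    x ⬝ᵥ (U * diagonal c * Uᵀ) *ᵥ x = ∑ j, c j * ((Uᵀ *ᵥ x) j) ^ 2 := by
  rw [conj_ray, dot_diag]

lemma norm_eq {U : Matrix (Fin m) (Fin m) ℝ} (hU2 : U * Uᵀ = 1) (x : Fin m → ℝ) :
    (Uᵀ *ᵥ x) ⬝ᵥ (Uᵀ *ᵥ x) = x ⬝ᵥ x := by
  have : x ⬝ᵥ (U * 1 * Uᵀ) *ᵥ x = (Uᵀ *ᵥ x) ⬝ᵥ (1 : Matrix (Fin m) (Fin m) ℝ) *ᵥ (Uᵀ *ᵥ x) :=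
    conj_ray U 1 x
  simpa [hU2] using this.symm

theorem cf {C D U V : Matrix (Fin m) (Fin m) ℝ} {c e : Fin m → ℝ}
    (hU1 : Uᵀ * U = 1) (hV2 : V * Vᵀ = 1)
    (hCU : C = U * diagonal c * Uᵀ) (hDV : D = V * diagonal e * Vᵀ)
    (hCD : ∀ x : Fin m → ℝ, x ⬝ᵥ C *ᵥ x ≤ x ⬝ᵥ D *ᵥ x)
    (k : Fin m) (hc : ∀ i, i ≤ k → c k ≤ c i) {r : ℝ} (he : ∀ j, k ≤ j → e j ≤ r) :
    c k ≤ r := by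
  classical
  have hk1 : (k : ℕ) + 1 ≤ m := k.isLt
  have hkm : (k : ℕ) ≤ m := le_of_lt k.isLt
  -- find a nonzero kernel element
  set W : Matrix (Fin m) (Fin m) ℝ := Vᵀ * U with hW
  set N : Matrix (Fin (k : ℕ)) (Fin ((k : ℕ) + 1)) ℝ :=
    fun j i => W (Fin.castLE hkm j) (Fin.castLE hk1 i) with hN
  obtain ⟨a, ha0, haker⟩ : ∃ a : Fin ((k : ℕ) + 1) → ℝ, a ≠ 0 ∧ N *ᵥ a = 0 := by
    have hne : LinearMap.ker N.mulVecLin ≠ ⊥ := by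
      apply LinearMap.ker_ne_bot_of_finrank_lt
      simp only [Module.finrank_pi, Fintype.card_fin]
      omega
    obtain ⟨a, ha, ha0⟩ := Submodule.exists_mem_ne_zero_of_ne_bot hne
    exact ⟨a, ha0, ha⟩
  set b : Fin m → ℝ := fun i => ∑ i' : Fin ((k : ℕ) + 1),
    if i = Fin.castLE hk1 i' then a i' else 0 with hb
  have hbcast : ∀ i' : Fin ((k : ℕ) + 1), b (Fin.castLE hk1 i') = a i' := by
    intro i'
    simp only [hb]
    rw [Finset.sum_eq_single i']
    · simp
    · intro j _ hj
      rw [if_neg (fun h => hj ((by simpa using h : i' = j).symm))]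
    · simp
  have hbsupp : ∀ i : Fin m, b i ≠ 0 → i ≤ k := by
    intro i hi
    by_contra hik
    apply hi
    simp only [hb]
    apply Finset.sum_eq_zero
    intro i' _
    rw [if_neg]
    intro h
    apply hik
    subst h
    exact Fin.mk_le_mk.mpr (Nat.lt_succ_iff.mp i'.isLt)
  set x : Fin m → ℝ := U *ᵥ b with hx
  have hUtx : Uᵀ *ᵥ x = b := by
    rw [hx, mulVec_mulVec, hU1, one_mulVec]
  -- the first k coordinates of Vᵀ x vanish
  set y : Fin m → ℝ := Vᵀ *ᵥ x with hy
  have hy0 : ∀ j : Fin m, (j : ℕ) < (k : ℕ) → y j = 0 := by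
    intro j hj
    have : y j = ∑ i : Fin m, W j i * b i := by
      simp only [hy, hx, mulVec_mulVec, hW, mulVec, dotProduct]
    rw [this]
    have hsum : ∑ i : Fin m, W j i * b i
        = ∑ i' : Fin ((k : ℕ) + 1), W j (Fin.castLE hk1 i') * a i' := by
      simp only [hb, Finset.mul_sum, mul_ite, mul_zero]
      rw [Finset.sum_comm]
      apply Finset.sum_congr rfl
      intro i' _
      rw [Finset.sum_eq_single (Fin.castLE hk1 i')]
      · simp
      · intro q _ hq
        rw [if_neg (by exact fun h => hq h)]
      · simp
    rw [hsum]
    have := congrFun haker ⟨j, hj⟩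
    simp only [hN, mulVec, dotProduct, Pi.zero_apply] at this
    convert this using 2 with i'
    rfl
  have hxx : x ⬝ᵥ x = ∑ j, b j ^ 2 := by
    have h1 : x ⬝ᵥ x = b ⬝ᵥ b := by
      conv_lhs => rw [hx]
      rw [dotProduct_mulVec, ← mulVec_transpose, hUtx]
    rw [h1]
    simp only [dotProduct]
    exact Finset.sum_congr rfl fun j _ => (sq (b j)).symm ▸ (by ring)
  have hbb : (0:ℝ) < x ⬝ᵥ x := by
    rw [hxx]
    obtain ⟨i0, hi0⟩ := Function.ne_iff.mp ha0
    apply Finset.sum_pos' (fun j _ => sq_nonneg _)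
    refine ⟨Fin.castLE hk1 i0, Finset.mem_univ _, ?_⟩
    rw [hbcast]
    exact sq_pos_of_ne_zero (show a i0 ≠ 0 from hi0)
  have hlow : c k * (x ⬝ᵥ x) ≤ x ⬝ᵥ C *ᵥ x := by
    rw [hCU, ray_eq, hUtx, hxx, Finset.mul_sum]
    apply Finset.sum_le_sum
    intro j _
    by_cases hbj : b j = 0
    · simp [hbj]
    · exact mul_le_mul_of_nonneg_right (hc j (hbsupp j hbj)) (sq_nonneg _)
  have hyy : ∑ j, (y j) ^ 2 = x ⬝ᵥ x := by
    rw [← norm_eq hV2 x]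
    simp only [dotProduct, hy]
    exact Finset.sum_congr rfl fun j _ => by ring
  have hup : x ⬝ᵥ D *ᵥ x ≤ r * (x ⬝ᵥ x) := by
    rw [hDV, ray_eq, ← hy, ← hyy, Finset.mul_sum]
    apply Finset.sum_le_sum
    intro j _
    by_cases hjk : (j : ℕ) < (k : ℕ)
    · rw [hy0 j hjk]
      simp
    · exact mul_le_mul_of_nonneg_right (he j (Fin.le_def.mpr (by omega))) (sq_nonneg _)
  have := (hlow.trans (hCD x)).trans hup
  exact (mul_le_mul_iff_of_pos_right hbb).mp this



variable {m : ℕ}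

lemma sorted_spectral {C : Matrix (Fin m) (Fin m) ℝ} (hC : C.IsHermitian) :
    ∃ (U : Matrix (Fin m) (Fin m) ℝ) (d : Fin m → ℝ) (σ : Equiv.Perm (Fin m)),
      Uᵀ * U = 1 ∧ U * Uᵀ = 1 ∧ C = U * diagonal d * Uᵀ ∧ Antitone d ∧
      d = hC.eigenvalues ∘ σ := by
  classical
  set μ := hC.eigenvalues with hμ
  set σ : Equiv.Perm (Fin m) := (Fin.revPerm : Equiv.Perm (Fin m)).trans (Tuple.sort μ) with hσ
  have hanti : Antitone (μ ∘ σ) := by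
    intro j j' hjj'
    have := Tuple.monotone_sort μ (a := Fin.rev j') (b := Fin.rev j) (Fin.rev_le_rev.mpr hjj')
    simpa [hσ, Function.comp] using this
  set W : Matrix (Fin m) (Fin m) ℝ := (hC.eigenvectorUnitary : Matrix (Fin m) (Fin m) ℝ)
    with hW
  have hstar : star W = Wᵀ := by
    rw [Matrix.star_eq_conjTranspose, Matrix.conjTranspose_eq_transpose_of_trivial]
  have hW1 : Wᵀ * W = 1 := by
    rw [← hstar]
    exact Matrix.mem_unitaryGroup_iff'.mp (hC.eigenvectorUnitary).2
  have hW2 : W * Wᵀ = 1 := by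
    rw [← hstar]
    exact Matrix.mem_unitaryGroup_iff.mp (hC.eigenvectorUnitary).2
  have hspec : C = W * diagonal μ * Wᵀ := by
    have := hC.spectral_theorem
    rwa [Unitary.conjStarAlgAut_apply, ← hW, hstar, ← hμ] at this
  refine ⟨W.submatrix id σ, μ ∘ σ, σ, ?_, ?_, ?_, hanti, rfl⟩
  · have : (W.submatrix id σ)ᵀ * W.submatrix id σ
        = (Wᵀ * W).submatrix (σ : Fin m → Fin m) (σ : Fin m → Fin m) := by
      rw [transpose_submatrix]
      exact Matrix.submatrix_mul_equiv Wᵀ W _ (Equiv.refl (Fin m)) _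
    rw [this, hW1, Matrix.submatrix_one_equiv]
  · have : W.submatrix id σ * (W.submatrix id σ)ᵀ
        = (W * Wᵀ).submatrix (id : Fin m → Fin m) (id : Fin m → Fin m) := by
      rw [transpose_submatrix]
      exact Matrix.submatrix_mul_equiv W Wᵀ _ σ _
    rw [this, hW2, Matrix.submatrix_id_id]
  · rw [transpose_submatrix]
    have h1 : diagonal (μ ∘ σ) = (diagonal μ).submatrix σ σ :=
      (Matrix.submatrix_diagonal μ σ σ.injective).symm
    rw [h1]
    have h2 : W.submatrix id σ * (diagonal μ).submatrix (σ : Fin m → Fin m) σ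
        = (W * diagonal μ).submatrix id σ :=
      Matrix.submatrix_mul_equiv W (diagonal μ) _ σ _
    rw [h2]
    have h3 : (W * diagonal μ).submatrix id σ * Wᵀ.submatrix (σ : Fin m → Fin m) id
        = (W * diagonal μ * Wᵀ).submatrix id id :=
      Matrix.submatrix_mul_equiv (W * diagonal μ) Wᵀ _ σ _
    rw [h3, Matrix.submatrix_id_id, hspec]


lemma sandwich_mul {m : ℕ} {U D1 D2 : Matrix (Fin m) (Fin m) ℝ} (hU1 : Uᵀ * U = 1) :
    (U * D1 * Uᵀ) * (U * D2 * Uᵀ) = U * (D1 * D2) * Uᵀ := by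
  have h : Uᵀ * (U * (D2 * Uᵀ)) = D2 * Uᵀ := by rw [← mul_assoc, hU1, one_mul]
  simp only [mul_assoc, h]

lemma dot_self_nonneg {p : ℕ} (v : Fin p → ℝ) : 0 ≤ v ⬝ᵥ v :=
  Finset.sum_nonneg fun j _ => mul_self_nonneg (v j)

end SvalAux

open SvalAux in
theorem stmt10 {m n l : ℕ} (A : Matrix (Fin m) (Fin n) ℝ) (Q : Matrix (Fin m) (Fin l) ℝ)
    (hl : l ≤ min m n) (hQ : Qᵀ * Q = 1) (α : ℝ)
    (hα0 : 0 < α) (hα : α ≤ sval (A * Aᵀ) l / 2) (i : ℕ) (hi1 : 1 ≤ i) (hil : i ≤ l) :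
    sval ((A * Aᵀ - α • (1 : Matrix (Fin m) (Fin m) ℝ)) * Q) i + α ≤ sval (A * Aᵀ) i := by
  classical
  have hlm : l ≤ m := hl.trans (min_le_left _ _)
  have hl1 : 1 ≤ l := hi1.trans hil
  set B : Matrix (Fin m) (Fin m) ℝ := A * Aᵀ with hBdef
  have hct : ∀ {p q : ℕ} (M : Matrix (Fin p) (Fin q) ℝ), Mᴴ = Mᵀ := fun M =>
    Matrix.conjTranspose_eq_transpose_of_trivial M
  have hB : B.IsHermitian := by
    have := Matrix.isHermitian_mul_conjTranspose_self A
    rwa [hct] at this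
  have hBpsd : B.PosSemidef := by
    have := Matrix.posSemidef_self_mul_conjTranspose A
    rwa [hct] at this
  obtain ⟨U, d, σ, hU1, hU2, hBdec, hdanti, hdσ⟩ := sorted_spectral hB
  have hd0 : ∀ j, 0 ≤ d j := by
    intro j
    rw [hdσ]
    exact hBpsd.eigenvalues_nonneg (σ j)
  set k : Fin m := ⟨i - 1, by omega⟩ with hk
  set kl : Fin m := ⟨l - 1, by omega⟩ with hkl
  have hkkl : k ≤ kl := by
    rw [Fin.le_def]
    simp only [hk, hkl]
    omega
  -- sval of B in terms of d
  set C₂ : Matrix (Fin m) (Fin m) ℝ := B * Bᴴ with hC₂def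
  have hC₂ : C₂.IsHermitian := Matrix.isHermitian_mul_conjTranspose_self B
  obtain ⟨V₂, e₂, σ₂, hV₂1, hV₂2, hC₂dec, he₂anti, he₂σ⟩ := sorted_spectral hC₂
  have hC₂U : C₂ = U * Matrix.diagonal (fun j => d j * d j) * Uᵀ := by
    have hBT : Bᵀ = B := by
      rw [← hct B]
      exact hB.eq
    rw [hC₂def, hct B, hBT, hBdec, sandwich_mul hU1, Matrix.diagonal_mul_diagonal]
  have hsvB : ∀ (j : ℕ) (hj : j - 1 < m), sval B j = Real.sqrt (e₂ ⟨j - 1, hj⟩) := by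
    intro j hj
    unfold sval
    exact sort_getD σ₂
      (funext fun t => by simp [he₂σ]; rfl) (fun a b hab => Real.sqrt_le_sqrt (he₂anti hab))
      ⟨j - 1, hj⟩
  have he₂d : ∀ t : Fin m, e₂ t = d t * d t := by
    intro t
    have h1 : e₂ t ≤ d t * d t := by
      refine cf hV₂1 hU2 hC₂dec hC₂U (fun x => le_rfl) t
        (fun a ha => he₂anti ha) (fun j hj => ?_)
      exact mul_le_mul (hdanti hj) (hdanti hj) (hd0 j) (hd0 t)
    have h2 : d t * d t ≤ e₂ t := by
      refine cf hU1 hV₂2 hC₂U hC₂dec (fun x => le_rfl) t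
        (fun a ha => mul_le_mul (hdanti ha) (hdanti ha) (hd0 t) (hd0 a)) (fun j hj => he₂anti hj)
    linarith
  have hsvBd : ∀ (j : ℕ) (hj : j - 1 < m), sval B j = d ⟨j - 1, hj⟩ := by
    intro j hj
    rw [hsvB j hj, he₂d, Real.sqrt_mul_self (hd0 _)]
  -- translate the hypothesis on α
  have h2α : 2 * α ≤ d kl := by
    have := hsvBd l (by omega)
    rw [hkl]
    rw [this] at hα
    linarith
  have hdk2α : 2 * α ≤ d k := le_trans h2α (hdanti hkkl)
  -- the matrix M
  set M : Matrix (Fin m) (Fin m) ℝ := B - α • (1 : Matrix (Fin m) (Fin m) ℝ) with hMdef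
  have hα1 : α • (1 : Matrix (Fin m) (Fin m) ℝ) = U * Matrix.diagonal (fun _ => α) * Uᵀ := by
    rw [← Matrix.smul_one_eq_diagonal]
    rw [Matrix.mul_smul, Matrix.mul_one, Matrix.smul_mul, hU2]
  have hMdec : M = U * Matrix.diagonal (fun j => d j - α) * Uᵀ := by
    rw [hMdef, hBdec, hα1, ← Matrix.sub_mul, ← Matrix.mul_sub, Matrix.diagonal_sub]
  have hMT : Mᵀ = M := by
    rw [hMdec]
    rw [Matrix.transpose_mul, Matrix.transpose_mul, Matrix.transpose_transpose,
      Matrix.diagonal_transpose, mul_assoc]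
  set X : Matrix (Fin m) (Fin l) ℝ := M * Q with hXdef
  set C₁ : Matrix (Fin m) (Fin m) ℝ := X * Xᴴ with hC₁def
  have hC₁ : C₁.IsHermitian := Matrix.isHermitian_mul_conjTranspose_self X
  obtain ⟨V₁, e₁, σ₁, hV₁1, hV₁2, hC₁dec, he₁anti, he₁σ⟩ := sorted_spectral hC₁
  have hsvX : sval X i = Real.sqrt (e₁ k) := by
    unfold sval
    exact sort_getD σ₁
      (funext fun t => by simp [he₁σ]; rfl) (fun a b hab => Real.sqrt_le_sqrt (he₁anti hab)) k
  have hD₁U : M * Mᵀ = U * Matrix.diagonal (fun j => (d j - α) * (d j - α)) * Uᵀ := by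
    rw [hMT, hMdec, sandwich_mul hU1, Matrix.diagonal_mul_diagonal]
  -- Rayleigh comparison
  have hray : ∀ x : Fin m → ℝ, x ⬝ᵥ C₁ *ᵥ x ≤ x ⬝ᵥ (M * Mᵀ) *ᵥ x := by
    intro x
    have hC₁x : C₁ = X * (1 : Matrix (Fin l) (Fin l) ℝ) * Xᵀ := by rw [hC₁def, hct, Matrix.mul_one]
    have hMx : M * Mᵀ = M * (1 : Matrix (Fin m) (Fin m) ℝ) * Mᵀ := by rw [Matrix.mul_one]
    rw [hC₁x, hMx, conj_ray, conj_ray, Matrix.one_mulVec, Matrix.one_mulVec]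
    set z : Fin m → ℝ := Mᵀ *ᵥ x with hz
    have hw : Xᵀ *ᵥ x = Qᵀ *ᵥ z := by
      rw [hXdef, Matrix.transpose_mul, ← Matrix.mulVec_mulVec, hz]
    rw [hw]
    set w : Fin l → ℝ := Qᵀ *ᵥ z with hwdef
    have h1 : z ⬝ᵥ (Q *ᵥ w) = w ⬝ᵥ w := by
      rw [Matrix.dotProduct_mulVec, ← Matrix.mulVec_transpose, hwdef]
    have h2 : (Q *ᵥ w) ⬝ᵥ z = w ⬝ᵥ w := by
      rw [dotProduct_comm, h1]
    have h3 : (Q *ᵥ w) ⬝ᵥ (Q *ᵥ w) = w ⬝ᵥ w := by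
      rw [Matrix.dotProduct_mulVec, ← Matrix.mulVec_transpose, Matrix.mulVec_mulVec, hQ,
        Matrix.one_mulVec]
    have h4 : 0 ≤ (z - Q *ᵥ w) ⬝ᵥ (z - Q *ᵥ w) := dot_self_nonneg _
    rw [sub_dotProduct, dotProduct_sub, dotProduct_sub, h1, h2, h3] at h4
    linarith
  -- final CF application
  have hkey : e₁ k ≤ (d k - α) * (d k - α) := by
    refine cf hV₁1 hU2 hC₁dec hD₁U hray k (fun a ha => he₁anti ha) (fun j hj => ?_)
    have hdj : d j ≤ d k := hdanti hj
    have h1 : d j - α ≤ d k - α := by linarith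
    have h2 : -(d k - α) ≤ d j - α := by
      have := hd0 j
      linarith
    have := sq_le_sq' h2 h1
    rw [sq, sq] at this
    exact this
  have hfin : sval X i ≤ d k - α := by
    rw [hsvX]
    have h1 : Real.sqrt (e₁ k) ≤ Real.sqrt ((d k - α) * (d k - α)) := Real.sqrt_le_sqrt hkey
    rwa [Real.sqrt_mul_self (by linarith)] at h1
  have hrhs : sval B i = d k := hsvBd i (by omega)
  rw [hrhs]
  linarith
end

section
/- Let A ∈ ℝ^{m×n}, let Q ∈ ℝ^{m×l} have orthonormal columns (l ≤ min(m,n)), and let α satisfy 0 < α ≤ σ_l(AAᵀ)/2. Then for every i ≤ l: σ_i(QᵀA) ≤ sqrt(σ_i(AAᵀQ - αQ) + α) ≤ σ_i(A). -/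
open Matrix
open scoped Matrix.Norms.L2Operator

open Module
open scoped RealInnerProductSpace

open scoped RealInnerProductSpace

section ListLemmas

theorem sorted_count_le (c : ℝ) : ∀ (L : List ℝ), L.Pairwise (· ≥ ·) → ∀ (i : ℕ) (hi : i < L.length),
    L.get ⟨i, hi⟩ < c → L.countP (fun x => decide (c ≤ x)) ≤ i := by
  intro L hL
  induction L with
  | nil => intro i hi; simp at hi
  | cons a L ih =>
    intro i hi hc
    rcases List.pairwise_cons.1 hL with ⟨ha, hL'⟩
    cases i with
    | zero =>
      simp only [List.get] at hc
      have : ∀ x ∈ L, ¬ (c ≤ x) := fun x hx h => absurd (le_trans h (ha x hx)) (not_le.2 hc)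
      have h0 : L.countP (fun x => decide (c ≤ x)) = 0 :=
        List.countP_eq_zero.2 (by intro x hx; simpa using this x hx)
      simp [List.countP_cons, h0, not_le.2 hc]
    | succ i =>
      have h1 := ih hL' i (by simpa using hi) (by simpa using hc)
      rw [List.countP_cons]
      split <;> omega

theorem sorted_lt_count (c : ℝ) : ∀ (L : List ℝ), L.Pairwise (· ≥ ·) → ∀ (i : ℕ) (hi : i < L.length),
    c ≤ L.get ⟨i, hi⟩ → i < L.countP (fun x => decide (c ≤ x)) := by
  intro L hL
  induction L with
  | nil => intro i hi; simp at hi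
  | cons a L ih =>
    intro i hi hc
    rcases List.pairwise_cons.1 hL with ⟨ha, hL'⟩
    cases i with
    | zero =>
      simp only [List.get] at hc
      simp [List.countP_cons, hc]
    | succ i =>
      have hi' : i < L.length := by simpa using hi
      have := ih hL' i hi' (by simpa using hc)
      have hca : c ≤ a := le_trans hc (ha _ (L.get_mem _))
      rw [List.countP_cons]
      simp [hca]
      omega

end ListLemmas

section Evk

variable {n : ℕ}

noncomputable def evL (U : Matrix (Fin n) (Fin n) ℝ) (hU : U.IsHermitian) : List ℝ :=
  List.insertionSort (· ≥ ·) (List.ofFn hU.eigenvalues)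

noncomputable def evk (U : Matrix (Fin n) (Fin n) ℝ) (hU : U.IsHermitian) (k : ℕ) : ℝ :=
  (evL U hU).getD (k - 1) 0

theorem evL_sorted (U : Matrix (Fin n) (Fin n) ℝ) (hU : U.IsHermitian) :
    (evL U hU).Pairwise (· ≥ ·) := List.pairwise_insertionSort _ _

theorem evL_perm (U : Matrix (Fin n) (Fin n) ℝ) (hU : U.IsHermitian) :
    (evL U hU).Perm (List.ofFn hU.eigenvalues) := List.perm_insertionSort _ _

theorem evL_length (U : Matrix (Fin n) (Fin n) ℝ) (hU : U.IsHermitian) :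
    (evL U hU).length = n := by
  rw [(evL_perm U hU).length_eq, List.length_ofFn]

theorem evk_congr {U V : Matrix (Fin n) (Fin n) ℝ} (hU : U.IsHermitian) (hV : V.IsHermitian)
    (h : U = V) (k : ℕ) : evk U hU k = evk V hV k := by subst h; rfl

theorem evk_eq_get (U : Matrix (Fin n) (Fin n) ℝ) (hU : U.IsHermitian) (k : ℕ)
    (hk : k - 1 < n) : evk U hU k = (evL U hU).get ⟨k - 1, by rw [evL_length]; exact hk⟩ := by
  rw [evk, List.getD_eq_getElem _ _ (by rw [evL_length]; exact hk)]
  simp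

theorem evk_mem (U : Matrix (Fin n) (Fin n) ℝ) (hU : U.IsHermitian) (k : ℕ)
    (hk : k - 1 < n) : ∃ j, evk U hU k = hU.eigenvalues j := by
  have : evk U hU k ∈ evL U hU := by
    rw [evk_eq_get U hU k hk]; exact List.get_mem _ _
  have := (evL_perm U hU).mem_iff.1 this
  rw [List.mem_ofFn] at this
  obtain ⟨j, hj⟩ := this
  exact ⟨j, hj.symm⟩

theorem evk_antitone (U : Matrix (Fin n) (Fin n) ℝ) (hU : U.IsHermitian) {k k' : ℕ}
    (h1 : 1 ≤ k) (h : k ≤ k') (hk' : k' - 1 < n) : evk U hU k' ≤ evk U hU k := by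
  rw [evk_eq_get U hU k (lt_of_le_of_lt (by omega) hk'), evk_eq_get U hU k' hk']
  rcases eq_or_lt_of_le (Nat.sub_le_sub_right h 1) with he | hlt
  · simp [he.symm]
  · simpa using List.pairwise_iff_getElem.1 (evL_sorted U hU) (k-1) (k'-1)
      (by rw [evL_length]; omega) (by rw [evL_length]; omega) hlt

theorem evk_nonneg {U : Matrix (Fin n) (Fin n) ℝ} (hU : U.PosSemidef) (k : ℕ)
    (hk : k - 1 < n) : 0 ≤ evk U hU.1 k := by
  obtain ⟨j, hj⟩ := evk_mem U hU.1 k hk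
  rw [hj]; exact hU.eigenvalues_nonneg j

/-- count of eigenvalues ≥ c, as a Finset card. -/
theorem card_filter_eq_countP (U : Matrix (Fin n) (Fin n) ℝ) (hU : U.IsHermitian) (p : ℝ → Prop)
    [DecidablePred p] :
    (Finset.univ.filter fun j => p (hU.eigenvalues j)).card
      = (evL U hU).countP (fun x => decide (p x)) := by
  rw [(evL_perm U hU).countP_eq]
  rw [List.ofFn_eq_map, List.countP_map]
  rw [List.countP_eq_length_filter]
  rfl

theorem card_ge_of_evk_ge (U : Matrix (Fin n) (Fin n) ℝ) (hU : U.IsHermitian) (k : ℕ)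
    (h1 : 1 ≤ k) (hk : k - 1 < n) {c : ℝ} (hc : c ≤ evk U hU k) :
    k ≤ (Finset.univ.filter fun j => c ≤ hU.eigenvalues j).card := by
  rw [card_filter_eq_countP]
  have := sorted_lt_count c (evL U hU) (evL_sorted U hU) (k-1)
    (by rw [evL_length]; exact hk) (by rw [← evk_eq_get U hU k hk]; exact hc)
  omega

theorem card_le_of_evk_lt (U : Matrix (Fin n) (Fin n) ℝ) (hU : U.IsHermitian) (k : ℕ)
    (hk : k - 1 < n) {c : ℝ} (hc : evk U hU k < c) :
    (Finset.univ.filter fun j => c ≤ hU.eigenvalues j).card ≤ k - 1 := by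
  rw [card_filter_eq_countP]
  exact sorted_count_le c (evL U hU) (evL_sorted U hU) (k-1)
    (by rw [evL_length]; exact hk) (by rw [← evk_eq_get U hU k hk]; exact hc)

end Evk

def EV {n : ℕ} (v : Fin n → ℝ) : EuclideanSpace ℝ (Fin n) := WithLp.toLp 2 v

section Spectral

variable {n : ℕ} (U : Matrix (Fin n) (Fin n) ℝ)




theorem inner_eq_dot (x y : EuclideanSpace ℝ (Fin n)) :
    ⟪x, y⟫ = (x : Fin n → ℝ) ⬝ᵥ (y : Fin n → ℝ) := by
  simp [PiLp.inner_apply, dotProduct, RCLike.inner_apply, mul_comm]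

theorem transpose_of_herm (hU : U.IsHermitian) : Uᵀ = U := by
  ext i j
  have := congrFun (congrFun hU i) j
  simpa [Matrix.conjTranspose_apply] using this

theorem inner_mulVec_symm (hU : U.IsHermitian) (x y : EuclideanSpace ℝ (Fin n)) :
    ⟪EV (U *ᵥ x), y⟫ = ⟪x, EV (U *ᵥ y)⟫ := by
  rw [inner_eq_dot, inner_eq_dot]
  show (U *ᵥ x) ⬝ᵥ (y : Fin n → ℝ) = (x : Fin n → ℝ) ⬝ᵥ (U *ᵥ y)
  rw [Matrix.dotProduct_mulVec, ← Matrix.mulVec_transpose, transpose_of_herm U hU,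
    dotProduct_comm]

theorem repr_mulVec (hU : U.IsHermitian) (j : Fin n) (x : EuclideanSpace ℝ (Fin n)) :
    hU.eigenvectorBasis.repr (EV (U *ᵥ x)) j
      = hU.eigenvalues j * hU.eigenvectorBasis.repr x j := by
  rw [OrthonormalBasis.repr_apply_apply, OrthonormalBasis.repr_apply_apply,
    ← inner_mulVec_symm U hU]
  have h : EV (U *ᵥ (hU.eigenvectorBasis j)) = hU.eigenvalues j • hU.eigenvectorBasis j := by
    have := hU.mulVec_eigenvectorBasis j
    exact congrArg EV this
  rw [h, inner_smul_left]
  simp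


theorem inner_repr (b : OrthonormalBasis (Fin n) ℝ (EuclideanSpace ℝ (Fin n)))
    (x y : EuclideanSpace ℝ (Fin n)) : ⟪x, y⟫ = ∑ j, b.repr x j * b.repr y j := by
  rw [← b.repr.inner_map_map x y, PiLp.inner_apply]
  norm_num [RCLike.inner_apply]
  exact Finset.sum_congr rfl fun j _ => mul_comm _ _

theorem norm_sq_repr (b : OrthonormalBasis (Fin n) ℝ (EuclideanSpace ℝ (Fin n)))
    (x : EuclideanSpace ℝ (Fin n)) : ‖x‖^2 = ∑ j, (b.repr x j)^2 := by
  rw [← real_inner_self_eq_norm_sq, inner_repr b]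
  simp [pow_two]

theorem repr_zero_of_mem_span (b : OrthonormalBasis (Fin n) ℝ (EuclideanSpace ℝ (Fin n)))
    (K : Finset (Fin n)) (x : EuclideanSpace ℝ (Fin n))
    (hx : x ∈ Submodule.span ℝ (b '' ↑K)) {j : Fin n} (hj : j ∉ K) : b.repr x j = 0 := by
  induction hx using Submodule.span_induction with
  | mem y hy =>
    obtain ⟨i, hi, rfl⟩ := hy
    rw [b.repr_self]
    simp only [EuclideanSpace.single_apply]
    rw [if_neg]
    rintro rfl; exact hj hi
  | zero => simp
  | add y z _ _ hy hz => simp [hy, hz]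
  | smul c y _ hy => simp [hy]

theorem finrank_span_orthonormal (b : OrthonormalBasis (Fin n) ℝ (EuclideanSpace ℝ (Fin n)))
    (K : Finset (Fin n)) : finrank ℝ (Submodule.span ℝ (b '' ↑K)) = K.card := by
  have li : LinearIndependent ℝ (fun j : (K : Set (Fin n)) => b j) :=
    b.orthonormal.linearIndependent.comp _ Subtype.val_injective
  rw [Set.image_eq_range, finrank_span_eq_card li]
  simp

theorem exists_ne_zero_mem_inf (W T : Submodule ℝ (EuclideanSpace ℝ (Fin n)))
    (h : n < finrank ℝ W + finrank ℝ T) : ∃ x, x ∈ W ∧ x ∈ T ∧ x ≠ 0 := by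
  have hsum := Submodule.finrank_sup_add_finrank_inf_eq W T
  have hle : finrank ℝ ↥(W ⊔ T) ≤ n := by
    simpa using Submodule.finrank_le (W ⊔ T)
  have hpos : 0 < finrank ℝ ↥(W ⊓ T) := by omega
  have hne : W ⊓ T ≠ ⊥ := by
    intro hbot
    rw [hbot] at hpos
    simp at hpos
  obtain ⟨x, hx, hx0⟩ := Submodule.exists_mem_ne_zero_of_ne_bot hne
  exact ⟨x, hx.1, hx.2, hx0⟩
end Spectral

section CF

variable {n : ℕ} (U : Matrix (Fin n) (Fin n) ℝ) (hU : U.IsHermitian)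

theorem inner_mulVec_self (x : EuclideanSpace ℝ (Fin n)) :
    ⟪x, EV (U *ᵥ x)⟫ = ∑ j, hU.eigenvalues j * (hU.eigenvectorBasis.repr x j)^2 := by
  rw [inner_repr hU.eigenvectorBasis]
  refine Finset.sum_congr rfl fun j _ => ?_
  rw [repr_mulVec U hU]
  ring

theorem exists_repr_ne_zero {x : EuclideanSpace ℝ (Fin n)}
    (b : OrthonormalBasis (Fin n) ℝ (EuclideanSpace ℝ (Fin n))) (hx : x ≠ 0) :
    ∃ j, b.repr x j ≠ 0 := by
  by_contra h
  push_neg at h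
  apply hx
  have : b.repr x = 0 := by ext j; exact h j
  simpa using congrArg b.repr.symm this

theorem cf_ge (k : ℕ) (h1 : 1 ≤ k) (hk : k ≤ n) (c : ℝ)
    (W : Submodule ℝ (EuclideanSpace ℝ (Fin n))) (hW : k ≤ finrank ℝ W)
    (hform : ∀ x ∈ W, c * ‖x‖^2 ≤ ⟪x, EV (U *ᵥ x)⟫) : c ≤ evk U hU k := by
  by_contra hlt
  push_neg at hlt
  classical
  set b := hU.eigenvectorBasis with hb
  set S : Finset (Fin n) := Finset.univ.filter (fun j => c ≤ hU.eigenvalues j) with hS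
  have hcard : S.card ≤ k - 1 := card_le_of_evk_lt U hU k (by omega) hlt
  set T := Submodule.span ℝ (b '' ↑Sᶜ) with hT
  have hTrank : finrank ℝ T = n - S.card := by
    rw [hT, finrank_span_orthonormal, Finset.card_compl, Fintype.card_fin]
  obtain ⟨x, hxW, hxT, hx0⟩ := exists_ne_zero_mem_inf W T (by omega)
  have hr0 : ∀ j ∈ S, b.repr x j = 0 := by
    intro j hj
    exact repr_zero_of_mem_span b Sᶜ x hxT (by simpa using hj)
  have hkey : ∑ j, hU.eigenvalues j * (b.repr x j)^2 < c * ∑ j, (b.repr x j)^2 := by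
    rw [Finset.mul_sum]
    obtain ⟨j₀, hj₀⟩ := exists_repr_ne_zero b hx0
    have hj₀S : j₀ ∉ S := fun h => hj₀ (hr0 _ h)
    refine Finset.sum_lt_sum (fun j _ => ?_) ⟨j₀, Finset.mem_univ _, ?_⟩
    · by_cases hj : j ∈ S
      · rw [hr0 j hj]; simp
      · have : hU.eigenvalues j < c := by
          by_contra hcc
          exact hj (by simp [hS, le_of_not_gt hcc])
        nlinarith [sq_nonneg (b.repr x j)]
    · have : hU.eigenvalues j₀ < c := by
        by_contra hcc
        exact hj₀S (by simp [hS, le_of_not_gt hcc])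
      have h2 : 0 < (b.repr x j₀)^2 := by positivity
      nlinarith
  have := hform x hxW
  rw [inner_mulVec_self U hU, norm_sq_repr b] at this
  linarith

theorem cf_le (k : ℕ) (h1 : 1 ≤ k) (hk : k ≤ n) (c : ℝ)
    (W : Submodule ℝ (EuclideanSpace ℝ (Fin n))) (hW : n + 1 ≤ finrank ℝ W + k)
    (hform : ∀ x ∈ W, ⟪x, EV (U *ᵥ x)⟫ ≤ c * ‖x‖^2) : evk U hU k ≤ c := by
  by_contra hlt
  push_neg at hlt
  classical
  set b := hU.eigenvectorBasis with hb
  set S : Finset (Fin n) := Finset.univ.filter (fun j => evk U hU k ≤ hU.eigenvalues j) with hS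
  have hcard : k ≤ S.card := card_ge_of_evk_ge U hU k h1 (by omega) le_rfl
  set T := Submodule.span ℝ (b '' ↑S) with hT
  have hTrank : finrank ℝ T = S.card := by rw [hT, finrank_span_orthonormal]
  obtain ⟨x, hxW, hxT, hx0⟩ := exists_ne_zero_mem_inf W T (by omega)
  have hr0 : ∀ j ∉ S, b.repr x j = 0 := fun j hj => repr_zero_of_mem_span b S x hxT hj
  have hkey : c * ∑ j, (b.repr x j)^2 < ∑ j, hU.eigenvalues j * (b.repr x j)^2 := by
    rw [Finset.mul_sum]
    obtain ⟨j₀, hj₀⟩ := exists_repr_ne_zero b hx0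
    have hj₀S : j₀ ∈ S := by
      by_contra h
      exact hj₀ (hr0 _ h)
    refine Finset.sum_lt_sum (fun j _ => ?_) ⟨j₀, Finset.mem_univ _, ?_⟩
    · by_cases hj : j ∈ S
      · have : c < hU.eigenvalues j := lt_of_lt_of_le hlt (by simpa [hS] using hj)
        nlinarith [sq_nonneg (b.repr x j)]
      · rw [hr0 j hj]; simp
    · have : c < hU.eigenvalues j₀ := lt_of_lt_of_le hlt (by simpa [hS] using hj₀S)
      have h2 : 0 < (b.repr x j₀)^2 := by positivity
      nlinarith
  have := hform x hxW
  rw [inner_mulVec_self U hU, norm_sq_repr b] at this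
  linarith

end CF

section MatrixAux

variable {m l : ℕ}

theorem conjT_eq_transpose (C : Matrix (Fin m) (Fin l) ℝ) : Cᴴ = Cᵀ := by
  ext i j
  simp [Matrix.conjTranspose_apply]

theorem norm_sq_eq_dot (z : EuclideanSpace ℝ (Fin m)) : ‖z‖^2 = (z : Fin m → ℝ) ⬝ᵥ z := by
  rw [← real_inner_self_eq_norm_sq, inner_eq_dot]

theorem norm_EV_mulVec (M : Matrix (Fin m) (Fin l) ℝ) (u : Fin l → ℝ) :
    ‖EV (M *ᵥ u)‖^2 = u ⬝ᵥ ((Mᵀ * M) *ᵥ u) := by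
  rw [norm_sq_eq_dot]
  show (M *ᵥ u) ⬝ᵥ (M *ᵥ u) = u ⬝ᵥ ((Mᵀ * M) *ᵥ u)
  rw [Matrix.dotProduct_mulVec (M *ᵥ u) M u, ← Matrix.mulVec_transpose,
    Matrix.mulVec_mulVec, dotProduct_comm, Matrix.dotProduct_mulVec,
    ← Matrix.mulVec_transpose, Matrix.transpose_mul, Matrix.transpose_transpose,
    dotProduct_comm]

theorem inner_mul_transpose_self (C : Matrix (Fin m) (Fin l) ℝ) (x : EuclideanSpace ℝ (Fin m)) :
    ⟪x, EV ((C * Cᵀ) *ᵥ x)⟫ = ‖EV (Cᵀ *ᵥ x)‖^2 := by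
  rw [norm_EV_mulVec, Matrix.transpose_transpose, inner_eq_dot]
  rfl

theorem mulVec_sub_smul_one (U : Matrix (Fin m) (Fin m) ℝ) (α : ℝ) (x : Fin m → ℝ) :
    (U - α • (1 : Matrix (Fin m) (Fin m) ℝ)) *ᵥ x = U *ᵥ x - α • x := by
  rw [Matrix.sub_mulVec, Matrix.smul_mulVec, Matrix.one_mulVec]

theorem repr_shift (U : Matrix (Fin m) (Fin m) ℝ) (hU : U.IsHermitian) (α : ℝ)
    (x : EuclideanSpace ℝ (Fin m)) (j : Fin m) :
    hU.eigenvectorBasis.repr (EV ((U - α • 1) *ᵥ x)) j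
      = (hU.eigenvalues j - α) * hU.eigenvectorBasis.repr x j := by
  have h : EV ((U - α • 1) *ᵥ x) = EV (U *ᵥ x) - α • x := by
    rw [mulVec_sub_smul_one]; rfl
  rw [h, map_sub, _root_.map_smul]
  simp only [PiLp.sub_apply, PiLp.smul_apply, repr_mulVec U hU, smul_eq_mul]
  ring

theorem norm_shift (U : Matrix (Fin m) (Fin m) ℝ) (hU : U.IsHermitian) (α : ℝ)
    (x : EuclideanSpace ℝ (Fin m)) :
    ‖EV ((U - α • 1) *ᵥ x)‖^2
      = ∑ j, (hU.eigenvalues j - α)^2 * (hU.eigenvectorBasis.repr x j)^2 := by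
  rw [norm_sq_repr hU.eigenvectorBasis]
  refine Finset.sum_congr rfl fun j _ => ?_
  rw [repr_shift U hU]
  ring

theorem norm_Qt_le (Q : Matrix (Fin m) (Fin l) ℝ) (hQ : Qᵀ * Q = 1)
    (z : EuclideanSpace ℝ (Fin m)) : ‖EV (Qᵀ *ᵥ z)‖^2 ≤ ‖z‖^2 := by
  have h1 : ‖EV (Qᵀ *ᵥ z)‖^2 = (z : Fin m → ℝ) ⬝ᵥ ((Q * Qᵀ) *ᵥ z) := by
    rw [norm_EV_mulVec, Matrix.transpose_transpose]
  have h2 : ‖EV ((1 - Q * Qᵀ) *ᵥ z)‖^2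
      = (z : Fin m → ℝ) ⬝ᵥ z - (z : Fin m → ℝ) ⬝ᵥ ((Q * Qᵀ) *ᵥ z) := by
    rw [norm_EV_mulVec]
    have hmat : (1 - Q * Qᵀ)ᵀ * (1 - Q * Qᵀ) = 1 - Q * Qᵀ := by
      rw [Matrix.transpose_sub, Matrix.transpose_one, Matrix.transpose_mul,
        Matrix.transpose_transpose]
      rw [Matrix.sub_mul, Matrix.mul_sub, Matrix.mul_sub, Matrix.one_mul, Matrix.mul_one]
      rw [Matrix.mul_assoc Q Qᵀ (Q * Qᵀ), ← Matrix.mul_assoc Qᵀ Q Qᵀ, hQ, Matrix.one_mul]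
      rw [Matrix.one_mul]
      abel
    rw [hmat, Matrix.sub_mulVec, Matrix.one_mulVec, dotProduct_sub]
  have h3 := sq_nonneg ‖EV ((1 - Q * Qᵀ) *ᵥ z)‖
  rw [h2] at h3
  rw [h1, norm_sq_eq_dot]
  linarith

theorem norm_Q_eq (Q : Matrix (Fin m) (Fin l) ℝ) (hQ : Qᵀ * Q = 1)
    (v : EuclideanSpace ℝ (Fin l)) : ‖EV (Q *ᵥ v)‖^2 = ‖v‖^2 := by
  rw [norm_EV_mulVec, hQ, Matrix.one_mulVec, norm_sq_eq_dot]

end MatrixAux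

section EvkSq

variable {n : ℕ}

theorem sorted_count_lt_le (c : ℝ) : ∀ (L : List ℝ), L.Pairwise (· ≥ ·) →
    ∀ (i : ℕ) (hi : i < L.length),
    L.get ⟨i, hi⟩ ≤ c → L.countP (fun x => decide (c < x)) ≤ i := by
  intro L hL
  induction L with
  | nil => intro i hi; simp at hi
  | cons a L ih =>
    intro i hi hc
    rcases List.pairwise_cons.1 hL with ⟨ha, hL'⟩
    cases i with
    | zero =>
      simp only [List.get] at hc
      have h0 : L.countP (fun x => decide (c < x)) = 0 :=
        List.countP_eq_zero.2 (by
          intro x hx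
          simpa using not_lt.2 (le_trans (ha x hx) hc))
      simp [List.countP_cons, h0, not_lt.2 hc]
    | succ i =>
      have h1 := ih hL' i (by simpa using hi) (by simpa using hc)
      rw [List.countP_cons]
      split <;> omega

theorem card_lt_le_of_evk_le (U : Matrix (Fin n) (Fin n) ℝ) (hU : U.IsHermitian) (k : ℕ)
    (hk : k - 1 < n) {c : ℝ} (hc : evk U hU k ≤ c) :
    (Finset.univ.filter fun j => c < hU.eigenvalues j).card ≤ k - 1 := by
  rw [card_filter_eq_countP]
  exact sorted_count_lt_le c (evL U hU) (evL_sorted U hU) (k-1)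
    (by rw [evL_length]; exact hk) (by rw [← evk_eq_get U hU k hk]; exact hc)

theorem isHermitian_sq {U : Matrix (Fin n) (Fin n) ℝ} (hU : U.IsHermitian) :
    (U * U).IsHermitian := by
  rw [Matrix.IsHermitian, Matrix.conjTranspose_mul, hU]

theorem inner_mulVec_sq (U : Matrix (Fin n) (Fin n) ℝ) (hU : U.IsHermitian)
    (x : EuclideanSpace ℝ (Fin n)) :
    ⟪x, EV ((U * U) *ᵥ x)⟫
      = ∑ j, (hU.eigenvalues j)^2 * (hU.eigenvectorBasis.repr x j)^2 := by
  have h : EV ((U * U) *ᵥ x) = EV (U *ᵥ (EV (U *ᵥ x))) := by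
    rw [← Matrix.mulVec_mulVec]; rfl
  rw [h, inner_repr hU.eigenvectorBasis]
  refine Finset.sum_congr rfl fun j _ => ?_
  rw [repr_mulVec U hU, repr_mulVec U hU]
  ring

theorem evk_sq (U : Matrix (Fin n) (Fin n) ℝ) (hU : U.PosSemidef) (k : ℕ)
    (h1 : 1 ≤ k) (hk : k ≤ n) :
    evk (U * U) (isHermitian_sq hU.1) k = (evk U hU.1 k)^2 := by
  classical
  set e := evk U hU.1 k with he
  have hkn : k - 1 < n := by omega
  have he0 : 0 ≤ e := evk_nonneg hU k hkn
  apply le_antisymm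
  · -- cf_le with span over complement of K := {ν > e}
    set K : Finset (Fin n) := Finset.univ.filter (fun j => e < hU.1.eigenvalues j) with hK
    have hcard : K.card ≤ k - 1 := card_lt_le_of_evk_le U hU.1 k hkn le_rfl
    set W := Submodule.span ℝ (hU.1.eigenvectorBasis '' ↑Kᶜ) with hW
    have hWrank : Module.finrank ℝ W = n - K.card := by
      rw [hW, finrank_span_orthonormal, Finset.card_compl, Fintype.card_fin]
    refine cf_le (U * U) (isHermitian_sq hU.1) k h1 hk _ W (by omega) ?_
    intro x hx
    rw [inner_mulVec_sq U hU.1, norm_sq_repr hU.1.eigenvectorBasis, Finset.mul_sum]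
    refine Finset.sum_le_sum fun j _ => ?_
    by_cases hj : j ∈ K
    · rw [repr_zero_of_mem_span hU.1.eigenvectorBasis Kᶜ x hx (by simpa using hj)]
      simp
    · have hje : hU.1.eigenvalues j ≤ e := by
        by_contra hcc
        exact hj (by simp [hK, lt_of_not_ge hcc])
      have hj0 : 0 ≤ hU.1.eigenvalues j := hU.eigenvalues_nonneg j
      have hsq : hU.1.eigenvalues j ^ 2 ≤ e ^ 2 := by nlinarith
      exact mul_le_mul_of_nonneg_right hsq (sq_nonneg _)
  · -- cf_ge with span over K := {e ≤ ν}
    set K : Finset (Fin n) := Finset.univ.filter (fun j => e ≤ hU.1.eigenvalues j) with hK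
    have hcard : k ≤ K.card := card_ge_of_evk_ge U hU.1 k h1 hkn le_rfl
    set W := Submodule.span ℝ (hU.1.eigenvectorBasis '' ↑K) with hW
    have hWrank : Module.finrank ℝ W = K.card := by rw [hW, finrank_span_orthonormal]
    refine cf_ge (U * U) (isHermitian_sq hU.1) k h1 hk _ W (by omega) ?_
    intro x hx
    rw [inner_mulVec_sq U hU.1, norm_sq_repr hU.1.eigenvectorBasis, Finset.mul_sum]
    refine Finset.sum_le_sum fun j _ => ?_
    by_cases hj : j ∈ K
    · have hje : e ≤ hU.1.eigenvalues j := by simpa [hK] using hj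
      have hsq : e ^ 2 ≤ hU.1.eigenvalues j ^ 2 := by nlinarith
      exact mul_le_mul_of_nonneg_right hsq (sq_nonneg _)
    · rw [repr_zero_of_mem_span hU.1.eigenvectorBasis K x hx hj]
      simp

end EvkSq

section Sval

theorem sval_eq_sqrt_evk {m n : ℕ} (A : Matrix (Fin m) (Fin n) ℝ) (i : ℕ) :
    sval A i
      = Real.sqrt (evk (A * Aᴴ) (Matrix.isHermitian_mul_conjTranspose_self A) i) := by
  have hA := Matrix.isHermitian_mul_conjTranspose_self A
  have hmap : (List.ofFn fun j : Fin m => Real.sqrt (hA.eigenvalues j))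
      = (List.ofFn hA.eigenvalues).map Real.sqrt := by
    rw [List.map_ofFn]; rfl
  haveI : IsAntisymm ℝ (· ≥ ·) := ⟨fun a b h1 h2 => le_antisymm h2 h1⟩
  have hsort : List.insertionSort (· ≥ ·) ((List.ofFn hA.eigenvalues).map Real.sqrt)
      = (List.insertionSort (· ≥ ·) (List.ofFn hA.eigenvalues)).map Real.sqrt := by
    refine (fun hp hs => List.Perm.eq_of_pairwise (fun a b _ _ h1 h2 => le_antisymm h2 h1)
      (List.pairwise_insertionSort _ _) hs hp) ?_ ?_
    · exact (List.perm_insertionSort _ _).trans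
        ((List.perm_insertionSort _ _).map Real.sqrt).symm
    · exact List.Pairwise.map Real.sqrt (fun a b h => Real.sqrt_le_sqrt h)
        (List.pairwise_insertionSort _ _)
  rw [sval, hmap, hsort, evk, evL]
  rw [show (0:ℝ) = Real.sqrt 0 by rw [Real.sqrt_zero]]
  rw [List.getD_map]
  rw [Real.sqrt_zero]

end Sval

theorem stmt11 {m n l : ℕ} (A : Matrix (Fin m) (Fin n) ℝ) (Q : Matrix (Fin m) (Fin l) ℝ)
    (hl : l ≤ min m n) (hQ : Qᵀ * Q = 1) (α : ℝ)
    (hα0 : 0 < α) (hα : α ≤ sval (A * Aᵀ) l / 2) (i : ℕ) (hi1 : 1 ≤ i) (hil : i ≤ l) :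
    sval (Qᵀ * A) i ≤ Real.sqrt (sval (A * Aᵀ * Q - α • Q) i + α) ∧
      Real.sqrt (sval (A * Aᵀ * Q - α • Q) i + α) ≤ sval A i := by
  classical
  have hlm : l ≤ m := le_trans hl (min_le_left _ _)
  have him : i ≤ m := le_trans hil hlm
  have hl1 : 1 ≤ l := le_trans hi1 hil
  set S := A * Aᵀ with hSdef
  have hSpsd : S.PosSemidef := by
    have h := Matrix.posSemidef_self_mul_conjTranspose A
    rwa [conjT_eq_transpose] at h
  have hS : S.IsHermitian := hSpsd.1
  set M := Qᵀ * S * Q with hMdef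
  have hMeq : (Qᵀ * A) * (Qᵀ * A)ᴴ = M := by
    rw [conjT_eq_transpose, Matrix.transpose_mul, Matrix.transpose_transpose, hMdef, hSdef]
    simp [Matrix.mul_assoc]
  have hM : M.IsHermitian := by
    rw [← hMeq]; exact Matrix.isHermitian_mul_conjTranspose_self _
  have hD : (S - α • (1 : Matrix (Fin m) (Fin m) ℝ)).IsHermitian := by
    rw [Matrix.IsHermitian, Matrix.conjTranspose_sub, Matrix.conjTranspose_smul,
      Matrix.conjTranspose_one, hS.eq, star_trivial]
  set B := S * Q - α • Q with hBdef
  have hBD : B = (S - α • (1 : Matrix (Fin m) (Fin m) ℝ)) * Q := by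
    rw [hBdef, Matrix.sub_mul, Matrix.smul_mul, Matrix.one_mul]
  set G := B * Bᴴ with hGdef
  have hG : G.IsHermitian := Matrix.isHermitian_mul_conjTranspose_self _
  have hGpsd : G.PosSemidef := Matrix.posSemidef_self_mul_conjTranspose _
  have hGt : G = B * Bᵀ := by rw [hGdef, conjT_eq_transpose]
  set s := evk S hS i with hs
  set sl := evk S hS l with hsl
  set μ := evk M hM i with hmu
  set g := evk G hG i with hgdefn
  have hsvalA : sval A i = Real.sqrt s := by
    rw [sval_eq_sqrt_evk, hs]
    exact congrArg Real.sqrt (evk_congr _ _ (by rw [conjT_eq_transpose, hSdef]) i)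
  have hsvalQA : sval (Qᵀ * A) i = Real.sqrt μ := by
    rw [sval_eq_sqrt_evk, hmu]
    exact congrArg Real.sqrt (evk_congr _ _ hMeq i)
  have hsvalB : sval B i = Real.sqrt g := by
    rw [sval_eq_sqrt_evk, hgdefn]
  have hαl : 2 * α ≤ sl := by
    have h1 : sval S l = sl := by
      rw [sval_eq_sqrt_evk, hsl]
      have h2 : evk (S * Sᴴ) (Matrix.isHermitian_mul_conjTranspose_self S) l
          = evk (S * S) (isHermitian_sq hS) l :=
        evk_congr _ _ (by rw [hS.eq]) l
      rw [h2, evk_sq S hSpsd l hl1 hlm,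
        Real.sqrt_sq (evk_nonneg hSpsd l (by omega))]
    rw [h1] at hα
    linarith
  have hsl_le_s : sl ≤ s := evk_antitone S hS hi1 hil (by omega)
  have hs2 : 2 * α ≤ s := le_trans hαl hsl_le_s
  -- upper bound on g
  have hgub : g ≤ (s - α)^2 := by
    set K : Finset (Fin m) := Finset.univ.filter (fun j => s < hS.eigenvalues j) with hK
    have hcard : K.card ≤ i - 1 := card_lt_le_of_evk_le S hS i (by omega) le_rfl
    set W := Submodule.span ℝ (hS.eigenvectorBasis '' ↑Kᶜ) with hW
    have hWrank : Module.finrank ℝ W = m - K.card := by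
      rw [hW, finrank_span_orthonormal, Finset.card_compl, Fintype.card_fin]
    rw [hgdefn]
    refine cf_le G hG i hi1 him _ W (by omega) ?_
    intro x hx
    have hBt : Bᵀ *ᵥ (x : Fin m → ℝ)
        = Qᵀ *ᵥ ((S - α • (1 : Matrix (Fin m) (Fin m) ℝ)) *ᵥ (x : Fin m → ℝ)) := by
      rw [hBD, Matrix.transpose_mul, transpose_of_herm _ hD, ← Matrix.mulVec_mulVec]
    calc ⟪x, EV (G *ᵥ x)⟫ = ‖EV (Bᵀ *ᵥ (x : Fin m → ℝ))‖^2 := by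
          rw [hGt]; exact inner_mul_transpose_self B x
      _ = ‖EV (Qᵀ *ᵥ ((S - α • (1 : Matrix (Fin m) (Fin m) ℝ)) *ᵥ (x : Fin m → ℝ)))‖^2 := by
          rw [hBt]
      _ ≤ ‖EV ((S - α • (1 : Matrix (Fin m) (Fin m) ℝ)) *ᵥ (x : Fin m → ℝ))‖^2 :=
          norm_Qt_le Q hQ (EV ((S - α • (1 : Matrix (Fin m) (Fin m) ℝ)) *ᵥ (x : Fin m → ℝ)))
      _ = ∑ j, (hS.eigenvalues j - α)^2 * (hS.eigenvectorBasis.repr x j)^2 :=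
          norm_shift S hS α x
      _ ≤ (s - α)^2 * ‖x‖^2 := by
          rw [norm_sq_repr hS.eigenvectorBasis, Finset.mul_sum]
          refine Finset.sum_le_sum fun j _ => ?_
          by_cases hj : j ∈ K
          · rw [repr_zero_of_mem_span hS.eigenvectorBasis Kᶜ x hx (by simpa using hj)]
            simp
          · have hje : hS.eigenvalues j ≤ s := by
              by_contra hcc
              exact hj (by simp [hK, lt_of_not_ge hcc])
            have hj0 : 0 ≤ hS.eigenvalues j := hSpsd.eigenvalues_nonneg j
            have hsq : (hS.eigenvalues j - α)^2 ≤ (s - α)^2 := by nlinarith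
            exact mul_le_mul_of_nonneg_right hsq (sq_nonneg _)
  refine ⟨?_, ?_⟩
  · rw [hsvalQA, hsvalB]
    apply Real.sqrt_le_sqrt
    rcases le_or_gt μ α with hcase | hcase
    · have := Real.sqrt_nonneg g
      linarith
    · -- lower bound on g
      have hglb : (μ - α)^2 ≤ g := by
        set K : Finset (Fin l) := Finset.univ.filter (fun j => μ ≤ hM.eigenvalues j) with hK
        have hcard : i ≤ K.card := card_ge_of_evk_ge M hM i hi1 (by omega) le_rfl
        set QL : EuclideanSpace ℝ (Fin l) →ₗ[ℝ] EuclideanSpace ℝ (Fin m) :=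
          { toFun := fun v => EV (Q *ᵥ v)
            map_add' := fun u v => by
              show EV (Q *ᵥ ((u + v : EuclideanSpace ℝ (Fin l)) : Fin l → ℝ)) = _
              rw [show ((u + v : EuclideanSpace ℝ (Fin l)) : Fin l → ℝ)
                  = (u : Fin l → ℝ) + (v : Fin l → ℝ) from rfl, Matrix.mulVec_add]
              rfl
            map_smul' := fun c v => by
              show EV (Q *ᵥ ((c • v : EuclideanSpace ℝ (Fin l)) : Fin l → ℝ)) = _
              rw [show ((c • v : EuclideanSpace ℝ (Fin l)) : Fin l → ℝ)
                  = c • (v : Fin l → ℝ) from rfl, Matrix.mulVec_smul]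
              rfl } with hQL
        have hQinj : Function.Injective QL := by
          intro u v huv
          have h2 : Qᵀ *ᵥ (Q *ᵥ (u : Fin l → ℝ)) = Qᵀ *ᵥ (Q *ᵥ (v : Fin l → ℝ)) :=
            congrArg (fun w : EuclideanSpace ℝ (Fin m) => Qᵀ *ᵥ (w : Fin m → ℝ)) huv
          rw [Matrix.mulVec_mulVec, Matrix.mulVec_mulVec, hQ, Matrix.one_mulVec,
            Matrix.one_mulVec] at h2
          exact WithLp.ofLp_injective 2 h2
        set V := Submodule.span ℝ (hM.eigenvectorBasis '' ↑K) with hV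
        have hVrank : Module.finrank ℝ V = K.card := by
          rw [hV, finrank_span_orthonormal]
        have hWrank : Module.finrank ℝ (V.map QL) = K.card := by
          rw [← hVrank]
          exact (LinearEquiv.finrank_eq (Submodule.equivMapOfInjective QL hQinj V)).symm
        rw [hgdefn]
        refine cf_ge G hG i hi1 him _ (V.map QL) (by omega) ?_
        intro y hy
        obtain ⟨x, hxV, rfl⟩ := Submodule.mem_map.1 hy
        have hBt2 : Bᵀ *ᵥ (Q *ᵥ (x : Fin l → ℝ))
            = (M - α • (1 : Matrix (Fin l) (Fin l) ℝ)) *ᵥ (x : Fin l → ℝ) := by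
          rw [hBD, Matrix.transpose_mul, transpose_of_herm _ hD, Matrix.mulVec_mulVec]
          rw [Matrix.mul_sub, Matrix.sub_mul, Matrix.mul_smul, Matrix.mul_one,
            Matrix.smul_mul, hQ, hMdef]
        calc (μ - α)^2 * ‖QL x‖^2 = (μ - α)^2 * ‖x‖^2 := by
              rw [show ‖QL x‖^2 = ‖EV (Q *ᵥ (x : Fin l → ℝ))‖^2 from rfl, norm_Q_eq Q hQ]
          _ ≤ ∑ j, (hM.eigenvalues j - α)^2 * (hM.eigenvectorBasis.repr x j)^2 := by
              rw [norm_sq_repr hM.eigenvectorBasis, Finset.mul_sum]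
              refine Finset.sum_le_sum fun j _ => ?_
              by_cases hj : j ∈ K
              · have hje : μ ≤ hM.eigenvalues j := by simpa [hK] using hj
                have hsq : (μ - α)^2 ≤ (hM.eigenvalues j - α)^2 := by nlinarith
                exact mul_le_mul_of_nonneg_right hsq (sq_nonneg _)
              · rw [repr_zero_of_mem_span hM.eigenvectorBasis K x hxV hj]
                simp
          _ = ‖EV ((M - α • (1 : Matrix (Fin l) (Fin l) ℝ)) *ᵥ (x : Fin l → ℝ))‖^2 :=
              (norm_shift M hM α x).symm
          _ = ‖EV (Bᵀ *ᵥ (Q *ᵥ (x : Fin l → ℝ)))‖^2 := by rw [hBt2]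
          _ = ⟪QL x, EV (G *ᵥ (QL x : Fin m → ℝ))⟫ := by
              rw [hGt]
              exact (inner_mul_transpose_self B (QL x)).symm
      have h3 : μ - α ≤ Real.sqrt g := by
        rw [show μ - α = Real.sqrt ((μ - α)^2) from (Real.sqrt_sq (by linarith)).symm]
        exact Real.sqrt_le_sqrt hglb
      linarith
  · rw [hsvalB, hsvalA]
    apply Real.sqrt_le_sqrt
    have h3 : Real.sqrt g ≤ s - α := by
      rw [show s - α = Real.sqrt ((s - α)^2) from (Real.sqrt_sq (by linarith)).symm]
      exact Real.sqrt_le_sqrt hgub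
    linarith
end

section
/- Let A ∈ ℝ^{m×n}, Q ∈ ℝ^{m×l} with orthonormal columns, and α ≥ 0. Then for every i ≤ l, σ_i(QᵀA)² ≤ σ_i(AAᵀQ). -/
open Matrix
open scoped Matrix.Norms.L2Operator

private lemma dot_self_nonneg {k : ℕ} (v : Fin k → ℝ) : 0 ≤ v ⬝ᵥ v :=
  Finset.sum_nonneg fun i _ => mul_self_nonneg (v i)

section CF

variable {N : ℕ} {H : Matrix (Fin N) (Fin N) ℝ}

private lemma UtU (hH : H.IsHermitian) :
    (hH.eigenvectorUnitary : Matrix (Fin N) (Fin N) ℝ)ᵀ *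
      (hH.eigenvectorUnitary : Matrix (Fin N) (Fin N) ℝ) = 1 := by
  rw [← Matrix.conjTranspose_eq_transpose_of_trivial]
  exact Matrix.mem_unitaryGroup_iff'.mp hH.eigenvectorUnitary.2

private lemma UUt (hH : H.IsHermitian) :
    (hH.eigenvectorUnitary : Matrix (Fin N) (Fin N) ℝ) *
      (hH.eigenvectorUnitary : Matrix (Fin N) (Fin N) ℝ)ᵀ = 1 := by
  rw [← Matrix.conjTranspose_eq_transpose_of_trivial]
  exact Matrix.mem_unitaryGroup_iff.mp hH.eigenvectorUnitary.2

private lemma diagUHU (hH : H.IsHermitian) :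
    (hH.eigenvectorUnitary : Matrix (Fin N) (Fin N) ℝ)ᵀ * H *
      (hH.eigenvectorUnitary : Matrix (Fin N) (Fin N) ℝ) = diagonal hH.eigenvalues := by
  have := hH.conjStarAlgAut_star_eigenvectorUnitary
  rw [Unitary.conjStarAlgAut_star_apply, Matrix.star_eq_conjTranspose, Matrix.conjTranspose_eq_transpose_of_trivial] at this
  simpa [RCLike.ofReal_real_eq_id] using this

private lemma spec (hH : H.IsHermitian) :
    H = (hH.eigenvectorUnitary : Matrix (Fin N) (Fin N) ℝ) * diagonal hH.eigenvalues *
      (hH.eigenvectorUnitary : Matrix (Fin N) (Fin N) ℝ)ᵀ := by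
  have := hH.spectral_theorem
  rw [Unitary.conjStarAlgAut_apply, Matrix.star_eq_conjTranspose, Matrix.conjTranspose_eq_transpose_of_trivial] at this
  simpa [RCLike.ofReal_real_eq_id] using this

/-- Easy direction of Courant–Fischer: if an `i`-dimensional isometrically embedded
subspace has Rayleigh quotients all `≥ μ`, then `μ` is at most the `i`-th largest
eigenvalue. -/
private lemma cf_le_s12 {i : ℕ} (hi : 1 ≤ i) (hiN : i ≤ N) (hH : H.IsHermitian)
    (V : Matrix (Fin N) (Fin i) ℝ) (hV : Vᵀ * V = 1) {μ : ℝ}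
    (hμ : ∀ y : Fin i → ℝ, μ * (y ⬝ᵥ y) ≤ (V *ᵥ y) ⬝ᵥ (H *ᵥ (V *ᵥ y))) :
    μ ≤ hH.eigenvalues (Tuple.sort hH.eigenvalues ⟨N - i, by omega⟩) := by
  classical
  set ev := hH.eigenvalues with hev
  set σ := Tuple.sort ev with hσ
  obtain ⟨U, hUUt, hUtU, hHUDU⟩ : ∃ U : Matrix (Fin N) (Fin N) ℝ,
      U * Uᵀ = 1 ∧ Uᵀ * U = 1 ∧ H = U * diagonal ev * Uᵀ :=
    ⟨_, UUt hH, UtU hH, spec hH⟩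
  set G : Matrix (Fin N) (Fin i) ℝ := Uᵀ * V with hG
  have hGtG : Gᵀ * G = 1 := by
    have h0 : Gᵀ * G = Vᵀ * (U * Uᵀ) * V := by
      rw [hG, Matrix.transpose_mul, Matrix.transpose_transpose,
        Matrix.mul_assoc, Matrix.mul_assoc, Matrix.mul_assoc]
    rw [h0, hUUt, Matrix.mul_one, hV]
  -- quadratic form in eigencoordinates
  have key : ∀ y : Fin i → ℝ,
      (V *ᵥ y) ⬝ᵥ (H *ᵥ (V *ᵥ y)) = ∑ k, ev k * ((G *ᵥ y) k) ^ 2 := by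
    intro y
    have h1 : H *ᵥ (V *ᵥ y) = U *ᵥ (diagonal ev *ᵥ (G *ᵥ y)) := by
      rw [hG]
      simp only [Matrix.mulVec_mulVec]
      rw [hHUDU]
      simp only [Matrix.mul_assoc]
    rw [h1, Matrix.dotProduct_mulVec, ← Matrix.mulVec_transpose]
    have h2 : Uᵀ *ᵥ (V *ᵥ y) = G *ᵥ y := by rw [hG, Matrix.mulVec_mulVec]
    rw [h2]
    simp only [dotProduct, Matrix.mulVec_diagonal]
    exact Finset.sum_congr rfl fun k _ => by ring
  -- find a nonzero vector avoiding the top i-1 eigendirections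
  let f : (Fin i → ℝ) →ₗ[ℝ] (Fin (i - 1) → ℝ) :=
    { toFun := fun y j => (G *ᵥ y) (σ ⟨N - 1 - (j : ℕ), by have := j.2; omega⟩)
      map_add' := by intro a b; funext j; simp [Matrix.mulVec_add]
      map_smul' := by intro c a; funext j; simp [Matrix.mulVec_smul] }
  have hfni : ¬ Function.Injective f := by
    intro hinj
    have h1 := LinearMap.finrank_le_finrank_of_injective hinj
    rw [Module.finrank_fin_fun, Module.finrank_fin_fun] at h1
    omega
  rw [Function.not_injective_iff] at hfni
  obtain ⟨a, b, hab, hne⟩ := hfni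
  set y := a - b with hy
  have hy0 : y ≠ 0 := sub_ne_zero.mpr hne
  have hfy : f y = 0 := by rw [hy, map_sub, hab, sub_self]
  set z := G *ᵥ y with hz
  have hzz : z ⬝ᵥ z = y ⬝ᵥ y := by
    have h3 : Gᵀ *ᵥ z = y := by
      rw [hz, Matrix.mulVec_mulVec, hGtG, Matrix.one_mulVec]
    calc z ⬝ᵥ z = z ⬝ᵥ (G *ᵥ y) := by rw [hz]
      _ = (Gᵀ *ᵥ z) ⬝ᵥ y := by rw [Matrix.dotProduct_mulVec, Matrix.mulVec_transpose]
      _ = y ⬝ᵥ y := by rw [h3]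
  have hyy : 0 < y ⬝ᵥ y := by
    rcases lt_or_eq_of_le (dot_self_nonneg y) with h | h
    · exact h
    · exact absurd (dotProduct_self_eq_zero.mp h.symm) hy0
  set t := ev (σ ⟨N - i, by omega⟩) with ht
  have hbound : ∀ k : Fin N, ev k * (z k) ^ 2 ≤ t * (z k) ^ 2 := by
    intro k
    by_cases hk : (σ.symm k : ℕ) ≤ N - i
    · have hle : ev k ≤ t := by
        have hmono := Tuple.monotone_sort ev
        have h4 : (ev ∘ σ) (σ.symm k) ≤ (ev ∘ σ) ⟨N - i, by omega⟩ :=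
          hmono (by simpa [Fin.le_def] using hk)
        simpa [ht, hσ] using h4
      exact mul_le_mul_of_nonneg_right hle (sq_nonneg _)
    · have hk2 := (σ.symm k).2
      set j : Fin (i - 1) := ⟨N - 1 - ((σ.symm k : ℕ)), by omega⟩ with hj
      have h5 : z k = 0 := by
        have h6 := congrFun hfy j
        have h7 : σ ⟨N - 1 - (j : ℕ), by have := j.2; omega⟩ = k := by
          have : (⟨N - 1 - (j : ℕ), by have := j.2; omega⟩ : Fin N) = σ.symm k := by
            apply Fin.ext
            simp only [hj]
            omega
          rw [this, Equiv.apply_symm_apply]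
        simpa [f, h7] using h6
      rw [h5]
      simp
  have hsum : ∑ k, ev k * (z k) ^ 2 ≤ t * (y ⬝ᵥ y) := by
    calc ∑ k, ev k * (z k) ^ 2 ≤ ∑ k, t * (z k) ^ 2 :=
          Finset.sum_le_sum fun k _ => hbound k
      _ = t * (z ⬝ᵥ z) := by
          have hzd : z ⬝ᵥ z = ∑ k, (z k) ^ 2 := by
            simp [dotProduct, sq]
          rw [hzd, Finset.mul_sum]
      _ = t * (y ⬝ᵥ y) := by rw [hzz]
  have hfin : μ * (y ⬝ᵥ y) ≤ t * (y ⬝ᵥ y) := (hμ y).trans ((key y).le.trans hsum)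
  exact le_of_mul_le_mul_right hfin hyy

/-- Hard direction witness: the top `i` eigenvectors give an isometric embedding on which
the Rayleigh quotient is at least the `i`-th largest eigenvalue. -/
private lemma cf_ge_s12 {i : ℕ} (hi : 1 ≤ i) (hiN : i ≤ N) (hM : H.IsHermitian) :
    ∃ V : Matrix (Fin N) (Fin i) ℝ, Vᵀ * V = 1 ∧
      ∀ y : Fin i → ℝ,
        hM.eigenvalues (Tuple.sort hM.eigenvalues ⟨N - i, by omega⟩) * (y ⬝ᵥ y)
          ≤ (V *ᵥ y) ⬝ᵥ (H *ᵥ (V *ᵥ y)) := by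
  classical
  set ev := hM.eigenvalues with hev
  set σ := Tuple.sort ev with hσ
  set t := ev (σ ⟨N - i, by omega⟩) with htdef
  obtain ⟨U, hUtU, hMU⟩ : ∃ U : Matrix (Fin N) (Fin N) ℝ,
      Uᵀ * U = 1 ∧ Uᵀ * H * U = diagonal ev := ⟨_, UtU hM, diagUHU hM⟩
  set τ : Fin i → Fin N := fun j => σ ⟨N - 1 - (j : ℕ), by have := j.2; omega⟩ with hτ
  have hτinj : Function.Injective τ := by
    intro a b hab
    have h0 := σ.injective hab
    have h1 := a.2; have h2 := b.2
    rw [Fin.mk.injEq] at h0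
    exact Fin.ext (by omega)
  set V : Matrix (Fin N) (Fin i) ℝ := Matrix.of (fun k j => U k (τ j)) with hVdef
  have hentry : ∀ (X : Matrix (Fin N) (Fin N) ℝ) (j j' : Fin i),
      (Vᵀ * (X * V)) j j' = (Uᵀ * (X * U)) (τ j) (τ j') := by
    intro X j j'
    simp only [Matrix.mul_apply, Matrix.transpose_apply, hVdef, Matrix.of_apply]
  have hVtV : Vᵀ * V = 1 := by
    ext j j'
    have h1 : (Vᵀ * V) j j' = (Uᵀ * U) (τ j) (τ j') := by
      simp only [Matrix.mul_apply, Matrix.transpose_apply, hVdef, Matrix.of_apply]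
    rw [h1, hUtU]
    by_cases h : j = j'
    · subst h; simp [Matrix.one_apply]
    · simp [Matrix.one_apply, h, hτinj.ne h]
  have hdiag : Vᵀ * (H * V) = diagonal (fun j => ev (τ j)) := by
    ext j j'
    rw [hentry H j j', ← Matrix.mul_assoc, hMU]
    by_cases h : j = j'
    · subst h; simp [Matrix.diagonal_apply]
    · simp [Matrix.diagonal_apply, h, hτinj.ne h]
  refine ⟨V, hVtV, ?_⟩
  intro y
  have hHt : Hᵀ = H := by
    rw [← Matrix.conjTranspose_eq_transpose_of_trivial]; exact hM
  have hform : (V *ᵥ y) ⬝ᵥ (H *ᵥ (V *ᵥ y)) = ∑ j, ev (τ j) * (y j) ^ 2 := by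
    have h3 : (V *ᵥ y) ⬝ᵥ (H *ᵥ (V *ᵥ y)) = ((Vᵀ * (H * V)) *ᵥ y) ⬝ᵥ y := by
      rw [Matrix.mulVec_mulVec, Matrix.dotProduct_mulVec]
      congr 1
      rw [← Matrix.mulVec_transpose, Matrix.mulVec_mulVec, Matrix.transpose_mul,
        hHt, Matrix.mul_assoc]
    rw [h3, hdiag, dotProduct_comm]
    simp only [dotProduct, Matrix.mulVec_diagonal]
    exact Finset.sum_congr rfl fun j _ => by ring
  rw [hform]
  have hyy : y ⬝ᵥ y = ∑ j, y j * y j := rfl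
  calc t * (y ⬝ᵥ y) = ∑ j, t * (y j * y j) := by rw [hyy, Finset.mul_sum]
    _ ≤ ∑ j, ev (τ j) * (y j) ^ 2 := by
        apply Finset.sum_le_sum
        intro j _
        have hts : t ≤ ev (τ j) := by
          have h4 := Tuple.monotone_sort ev
            (a := (⟨N - i, by omega⟩ : Fin N))
            (b := (⟨N - 1 - (j : ℕ), by have := j.2; omega⟩ : Fin N))
            (by simp only [Fin.mk_le_mk]; have := j.2; omega)
          simpa [htdef, hτ, hσ] using h4
        nlinarith [mul_self_nonneg (y j)]

end CF

private lemma sval_eq {m n : ℕ} (A : Matrix (Fin m) (Fin n) ℝ) {i : ℕ}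
    (hi : 1 ≤ i) (him : i ≤ m) :
    sval A i = Real.sqrt ((Matrix.isHermitian_mul_conjTranspose_self A).eigenvalues
      (Tuple.sort (Matrix.isHermitian_mul_conjTranspose_self A).eigenvalues
        ⟨m - i, by omega⟩)) := by
  classical
  set ev := (Matrix.isHermitian_mul_conjTranspose_self A).eigenvalues with hev
  set σ := Tuple.sort ev with hσ
  set g : Fin m → ℝ := fun j => Real.sqrt (ev j) with hg
  set d : Fin m → ℝ := fun k => g (σ (Fin.rev k)) with hd
  have hsorted : (List.ofFn d).Pairwise (· ≥ ·) := by
    rw [List.pairwise_ofFn]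
    intro k k' hkk'
    have hrev : Fin.rev k' ≤ Fin.rev k := by
      rw [Fin.le_def]
      simp only [Fin.val_rev]
      omega
    exact Real.sqrt_le_sqrt (Tuple.monotone_sort ev hrev)
  have hperm : (List.ofFn d).Perm (List.ofFn g) := by
    have hpi : d = g ∘ ⇑(Fin.revPerm.trans σ) := by
      funext k; simp [hd, Fin.revPerm]
    have h2 : ((List.finRange m).map ⇑(Fin.revPerm.trans σ)).Perm (List.finRange m) := by
      apply List.perm_of_nodup_nodup_toFinset_eq
      · exact (List.nodup_finRange m).map (Equiv.injective _)
      · exact List.nodup_finRange m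
      · ext x
        constructor
        · intro _; exact List.mem_toFinset.mpr (List.mem_finRange x)
        · intro _
          exact List.mem_toFinset.mpr
            (List.mem_map.mpr ⟨(Fin.revPerm.trans σ).symm x, List.mem_finRange _, by simp⟩)
    have h3 : List.ofFn d = ((List.finRange m).map ⇑(Fin.revPerm.trans σ)).map g := by
      rw [List.ofFn_eq_map, hpi, List.map_map]
    rw [h3, List.ofFn_eq_map]
    exact h2.map g
  have heq : List.insertionSort (· ≥ ·) (List.ofFn g) = List.ofFn d :=
    List.Perm.eq_of_pairwise' (List.pairwise_insertionSort _ _) hsorted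
      ((List.perm_insertionSort _ _).trans hperm.symm)
  have hlen : i - 1 < (List.ofFn d).length := by simp; omega
  have : sval A i = (List.ofFn d).getD (i - 1) 0 := by
    rw [sval, ← heq]
  rw [this, List.getD_eq_getElem _ _ hlen, List.getElem_ofFn]
  have hidx : σ (Fin.rev ⟨i - 1, by omega⟩) = σ ⟨m - i, by omega⟩ := by
    congr 1
    rw [Fin.rev]
    apply Fin.ext
    simp only []
    omega
  simp only [hd, hg]
  rw [hidx]

private lemma dot_mul_transpose {p q : ℕ} (M : Matrix (Fin p) (Fin q) ℝ) (x : Fin p → ℝ) :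
    x ⬝ᵥ ((M * Mᵀ) *ᵥ x) = (Mᵀ *ᵥ x) ⬝ᵥ (Mᵀ *ᵥ x) := by
  rw [← Matrix.mulVec_mulVec, Matrix.dotProduct_mulVec, ← Matrix.mulVec_transpose]

theorem stmt12 {m n l : ℕ} (A : Matrix (Fin m) (Fin n) ℝ) (Q : Matrix (Fin m) (Fin l) ℝ)
    (hl : l ≤ min m n) (hQ : Qᵀ * Q = 1) (α : ℝ) (hα : 0 ≤ α)
    (i : ℕ) (hi1 : 1 ≤ i) (hil : i ≤ l) :
    sval (Qᵀ * A) i ^ 2 ≤ sval (A * Aᵀ * Q) i := by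
  have hlm : l ≤ m := hl.trans (min_le_left _ _)
  have him : i ≤ m := hil.trans hlm
  rw [sval_eq (Qᵀ * A) hi1 hil, sval_eq (A * Aᵀ * Q) hi1 him]
  have hμ0 : 0 ≤ (Matrix.isHermitian_mul_conjTranspose_self (Qᵀ * A)).eigenvalues
      (Tuple.sort (Matrix.isHermitian_mul_conjTranspose_self (Qᵀ * A)).eigenvalues
        ⟨l - i, by omega⟩) :=
    Matrix.eigenvalues_self_mul_conjTranspose_nonneg _ _
  rw [Real.sq_sqrt hμ0]
  apply Real.le_sqrt_of_sq_le
  obtain ⟨V₀, hV₀, hQF⟩ := cf_ge_s12 hi1 hil (Matrix.isHermitian_mul_conjTranspose_self (Qᵀ * A))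
  have hW : (Q * V₀)ᵀ * (Q * V₀) = 1 := by
    rw [Matrix.transpose_mul, Matrix.mul_assoc, ← Matrix.mul_assoc Qᵀ Q, hQ,
      Matrix.one_mul, hV₀]
  apply cf_le_s12 hi1 him (Matrix.isHermitian_mul_conjTranspose_self (A * Aᵀ * Q)) (Q * V₀) hW
  intro y
  have hCt : (A * Aᵀ * Q)ᴴ = (A * Aᵀ * Q)ᵀ := Matrix.conjTranspose_eq_transpose_of_trivial _
  have hBt : (Qᵀ * A)ᴴ = (Qᵀ * A)ᵀ := Matrix.conjTranspose_eq_transpose_of_trivial _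
  set w : Fin l → ℝ := V₀ *ᵥ y with hw
  set u : Fin l → ℝ := (A * Aᵀ * Q)ᵀ *ᵥ ((Q * V₀) *ᵥ y) with hu
  -- the right-hand side is ‖u‖²
  have hRHS : ((Q * V₀) *ᵥ y) ⬝ᵥ (((A * Aᵀ * Q) * (A * Aᵀ * Q)ᴴ) *ᵥ ((Q * V₀) *ᵥ y))
      = u ⬝ᵥ u := by
    rw [hCt, dot_mul_transpose, ← hu]
  rw [hRHS]
  -- the Rayleigh quotient bound gives μ * (y ⬝ᵥ y) ≤ w ⬝ᵥ u
  have hBBt : (Qᵀ * A) * (Qᵀ * A)ᴴ = (A * Aᵀ * Q)ᵀ * Q := by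
    rw [hBt]
    simp [Matrix.transpose_mul, Matrix.transpose_transpose, Matrix.mul_assoc]
  have hmid : ((Qᵀ * A) * (Qᵀ * A)ᴴ) *ᵥ w = u := by
    rw [hu, hw, hBBt]
    simp only [Matrix.mulVec_mulVec, Matrix.mul_assoc]
  have h1 : (Matrix.isHermitian_mul_conjTranspose_self (Qᵀ * A)).eigenvalues
      (Tuple.sort (Matrix.isHermitian_mul_conjTranspose_self (Qᵀ * A)).eigenvalues
        ⟨l - i, by omega⟩) * (y ⬝ᵥ y) ≤ w ⬝ᵥ u := by
    have := hQF y
    rwa [hmid] at this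
  -- auxiliary positivity and Cauchy–Schwarz facts
  have hww : w ⬝ᵥ w = y ⬝ᵥ y := by
    have h3 : V₀ᵀ *ᵥ w = y := by
      rw [hw, Matrix.mulVec_mulVec, hV₀, Matrix.one_mulVec]
    calc w ⬝ᵥ w = w ⬝ᵥ (V₀ *ᵥ y) := by rw [hw]
      _ = (V₀ᵀ *ᵥ w) ⬝ᵥ y := by rw [Matrix.dotProduct_mulVec, Matrix.mulVec_transpose]
      _ = y ⬝ᵥ y := by rw [h3]
  have hCS : (w ⬝ᵥ u) ^ 2 ≤ (y ⬝ᵥ y) * (u ⬝ᵥ u) := by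
    have h4 := Finset.sum_mul_sq_le_sq_mul_sq Finset.univ w u
    have h5 : w ⬝ᵥ w = ∑ j, (w j) ^ 2 := by simp [dotProduct, sq]
    have h6 : u ⬝ᵥ u = ∑ j, (u j) ^ 2 := by simp [dotProduct, sq]
    have h7 : w ⬝ᵥ u = ∑ j, w j * u j := rfl
    rw [← hww, h5, h6, h7]
    exact h4
  have hy0 : 0 ≤ y ⬝ᵥ y := dot_self_nonneg y
  have hu0 : 0 ≤ u ⬝ᵥ u := dot_self_nonneg u
  rcases eq_or_lt_of_le hy0 with hy | hy
  · rw [← hy]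
    simpa using hu0
  · nlinarith [sq_nonneg (w ⬝ᵥ u), mul_le_mul_of_nonneg_left h1 hμ0]
end

section
/- Let A be an m×n real matrix with m ≥ n, and let Q be an m×l matrix with orthonormal columns (l ≤ n). Then for any real numbers α_1, ..., α_p, any l×n matrix G, any l×l matrix R and any n×l matrix F, ‖QQᵀA - A‖ ≤ 2‖F G Aᵀ ∏_{c=1}^{p}(AAᵀ - α_c I) - Aᵀ‖ + 2‖F‖·‖QR - (G Aᵀ ∏_{c=1}^{p}(AAᵀ - α_c I))ᵀ‖, where ‖·‖ denotes the spectral norm. -/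
open Matrix
open scoped Matrix.Norms.L2Operator

lemma aux_norm_one_le {l : ℕ} : ‖(1 : Matrix (Fin l) (Fin l) ℝ)‖ ≤ 1 := by
  rcases Nat.eq_zero_or_pos l with h | h
  · subst h
    have : (1 : Matrix (Fin 0) (Fin 0) ℝ) = 0 := Subsingleton.elim _ _
    simp [this]
  · have : Nonempty (Fin l) := ⟨⟨0, h⟩⟩
    exact le_of_eq CStarRing.norm_one

lemma aux_tnorm {k r : ℕ} (X : Matrix (Fin k) (Fin r) ℝ) : ‖Xᵀ‖ = ‖X‖ := by
  rw [← Matrix.conjTranspose_eq_transpose_of_trivial, Matrix.l2_opNorm_conjTranspose]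

/-- Shifted-power-iteration analogue of Lemma A.1 of Rokhlin–Szlam–Tygert:
for `Q` with orthonormal columns and arbitrary `R`, `F`, `G` and shifts `α c`,
`‖QQᵀA - A‖ ≤ 2‖F G Aᵀ ∏ (AAᵀ - α_c I) - Aᵀ‖ + 2‖F‖ ‖QR - (G Aᵀ ∏ (AAᵀ - α_c I))ᵀ‖`
in the spectral norm. -/
theorem stmt14 {m n l p : ℕ} (hmn : n ≤ m) (hl : l ≤ n)
    (A : Matrix (Fin m) (Fin n) ℝ) (Q : Matrix (Fin m) (Fin l) ℝ) (hQ : Qᵀ * Q = 1)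
    (α : Fin p → ℝ)
    (R : Matrix (Fin l) (Fin l) ℝ) (F : Matrix (Fin n) (Fin l) ℝ)
    (G : Matrix (Fin l) (Fin n) ℝ) :
    ‖Q * Qᵀ * A - A‖ ≤
      2 * ‖F * (G * Aᵀ *
          (List.ofFn fun c : Fin p =>
            A * Aᵀ - α c • (1 : Matrix (Fin m) (Fin m) ℝ)).prod) - Aᵀ‖ +
        2 * ‖F‖ * ‖Q * R - (G * Aᵀ *
          (List.ofFn fun c : Fin p =>
            A * Aᵀ - α c • (1 : Matrix (Fin m) (Fin m) ℝ)).prod)ᵀ‖ := by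
  set S : Matrix (Fin l) (Fin m) ℝ :=
    G * Aᵀ * (List.ofFn fun c : Fin p =>
      A * Aᵀ - α c • (1 : Matrix (Fin m) (Fin m) ℝ)).prod with hS
  -- norm of Q
  have hQn : ‖Q‖ ≤ 1 := by
    have h : ‖Q‖ * ‖Q‖ = ‖(1 : Matrix (Fin l) (Fin l) ℝ)‖ := by
      rw [← hQ, ← Matrix.l2_opNorm_conjTranspose_mul_self, Matrix.conjTranspose_eq_transpose_of_trivial]
    nlinarith [norm_nonneg Q, aux_norm_one_le (l := l)]
  have hP : ‖Q * Qᵀ - 1‖ ≤ 2 := by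
    calc ‖Q * Qᵀ - 1‖ ≤ ‖Q * Qᵀ‖ + ‖(1 : Matrix (Fin m) (Fin m) ℝ)‖ := norm_sub_le _ _
    _ ≤ ‖Q‖ * ‖Qᵀ‖ + 1 := add_le_add (Matrix.l2_opNorm_mul Q Qᵀ) aux_norm_one_le
    _ ≤ 1 * 1 + 1 := by
        have := aux_tnorm Q
        have h0 := norm_nonneg Qᵀ
        nlinarith [norm_nonneg Q]
    _ = 2 := by norm_num
  -- key algebraic identity
  have hRQ : Rᵀ * Qᵀ * (Q * Qᵀ) = Rᵀ * Qᵀ := by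
    rw [Matrix.mul_assoc Rᵀ, ← Matrix.mul_assoc Qᵀ, hQ, Matrix.one_mul]
  have key : (Q * Qᵀ * A - A)ᵀ =
      (Aᵀ - F * S) * (Q * Qᵀ - 1) + (F * (S - Rᵀ * Qᵀ)) * (Q * Qᵀ - 1) := by
    have expand : (F * (S - Rᵀ * Qᵀ)) * (Q * Qᵀ - 1) = (F * S) * (Q * Qᵀ - 1) := by
      rw [Matrix.mul_sub F, Matrix.sub_mul, Matrix.mul_sub, Matrix.mul_sub,
        Matrix.mul_assoc F (Rᵀ * Qᵀ), hRQ]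
      simp [Matrix.mul_one]
    rw [expand, Matrix.sub_mul, sub_add_cancel, Matrix.mul_sub, Matrix.mul_one,
      Matrix.transpose_sub, Matrix.transpose_mul, Matrix.transpose_mul,
      Matrix.transpose_transpose]
  calc ‖Q * Qᵀ * A - A‖ = ‖(Q * Qᵀ * A - A)ᵀ‖ := (aux_tnorm _).symm
  _ ≤ ‖(Aᵀ - F * S) * (Q * Qᵀ - 1)‖ + ‖(F * (S - Rᵀ * Qᵀ)) * (Q * Qᵀ - 1)‖ := by
      rw [key]; exact norm_add_le _ _
  _ ≤ ‖Aᵀ - F * S‖ * ‖Q * Qᵀ - 1‖ + ‖F‖ * ‖S - Rᵀ * Qᵀ‖ * ‖Q * Qᵀ - 1‖ := by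
      gcongr
      · exact Matrix.l2_opNorm_mul _ _
      · calc ‖(F * (S - Rᵀ * Qᵀ)) * (Q * Qᵀ - 1)‖
            ≤ ‖F * (S - Rᵀ * Qᵀ)‖ * ‖Q * Qᵀ - 1‖ := Matrix.l2_opNorm_mul _ _
        _ ≤ ‖F‖ * ‖S - Rᵀ * Qᵀ‖ * ‖Q * Qᵀ - 1‖ := by
            gcongr; exact Matrix.l2_opNorm_mul _ _
  _ ≤ ‖Aᵀ - F * S‖ * 2 + ‖F‖ * ‖S - Rᵀ * Qᵀ‖ * 2 := by
      gcongr <;> positivity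
  _ = 2 * ‖F * S - Aᵀ‖ + 2 * ‖F‖ * ‖Q * R - Sᵀ‖ := by
      rw [norm_sub_rev, ← aux_tnorm (S - Rᵀ * Qᵀ)]
      have : (S - Rᵀ * Qᵀ)ᵀ = -(Q * R - Sᵀ) := by
        simp [Matrix.transpose_sub, Matrix.transpose_mul]
      rw [this, norm_neg]; ring
end

section
/- Let A ∈ ℝ^{m×n} with m ≥ n, and let Q ∈ ℝ^{m×l} (l ≤ n) have orthonormal columns such that the column space of Q equals the column space of W := ∏_{c=1}^{p}(AAᵀ - α_{p-c+1}I) A Ω for some n×l matrix Ω and shifts α_1,...,α_p. Then there exists an l×l matrix R with QR = W, and consequently for any n×l matrix F, ‖QQᵀA - A‖ ≤ 2‖F Ωᵀ Aᵀ ∏_{c=1}^{p}(AAᵀ - α_c I) - Aᵀ‖ in the spectral norm. -/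
open Matrix
open scoped Matrix.Norms.L2Operator

lemma ofFn_rev_reverse {β : Type*} {p : ℕ} (g : Fin p → β) :
    (List.ofFn fun c : Fin p => g c.rev).reverse = List.ofFn g := by
  apply List.ext_getElem (by simp)
  intro i h1 h2
  have hip : i < p := by simpa using h2
  simp only [List.getElem_reverse, List.getElem_ofFn, List.length_reverse, List.length_ofFn]
  congr 1
  ext
  simp [Fin.rev]
  omega

lemma l2_norm_one_le (k : ℕ) : ‖(1 : Matrix (Fin k) (Fin k) ℝ)‖ ≤ 1 := by
  have h := Matrix.l2_opNorm_conjTranspose_mul_self (1 : Matrix (Fin k) (Fin k) ℝ)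
  simp only [conjTranspose_one, one_mul] at h
  nlinarith [norm_nonneg (1 : Matrix (Fin k) (Fin k) ℝ)]

/-- If the column space of `Q` (orthonormal columns) equals the column space of
`W = ∏_{c=1}^{p}(AAᵀ - α_{p-c+1} I) A Ω`, then there exists `R` with `Q * R = W`, and
for any `F`, `‖QQᵀA - A‖ ≤ 2‖F Ωᵀ Aᵀ ∏_{c=1}^{p}(AAᵀ - α_c I) - Aᵀ‖` in the spectral norm. -/
theorem stmt19 {m n l p : ℕ} (hmn : n ≤ m) (hl : l ≤ n)
    (A : Matrix (Fin m) (Fin n) ℝ) (Q : Matrix (Fin m) (Fin l) ℝ) (hQ : Qᵀ * Q = 1)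
    (α : Fin p → ℝ) (Ω : Matrix (Fin n) (Fin l) ℝ)
    (hspan : LinearMap.range Q.mulVecLin =
      LinearMap.range ((List.ofFn fun c : Fin p =>
          A * Aᵀ - α c.rev • (1 : Matrix (Fin m) (Fin m) ℝ)).prod * A * Ω).mulVecLin) :
    (∃ R : Matrix (Fin l) (Fin l) ℝ,
        Q * R = (List.ofFn fun c : Fin p =>
          A * Aᵀ - α c.rev • (1 : Matrix (Fin m) (Fin m) ℝ)).prod * A * Ω) ∧
      ∀ F : Matrix (Fin n) (Fin l) ℝ,
        ‖Q * Qᵀ * A - A‖ ≤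
          2 * ‖F * (Ωᵀ * Aᵀ *
              (List.ofFn fun c : Fin p =>
                A * Aᵀ - α c • (1 : Matrix (Fin m) (Fin m) ℝ)).prod) - Aᵀ‖ := by
  set P := (List.ofFn fun c : Fin p =>
      A * Aᵀ - α c.rev • (1 : Matrix (Fin m) (Fin m) ℝ)).prod with hP
  set W := P * A * Ω with hWdef
  -- Q Qᵀ W = W
  have hW : Q * Qᵀ * W = W := by
    apply Matrix.toLin'.injective
    apply LinearMap.ext
    intro v
    have hv : W.mulVec v ∈ LinearMap.range W.mulVecLin := ⟨v, rfl⟩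
    rw [← hspan] at hv
    obtain ⟨u, hu⟩ := hv
    simp only [Matrix.mulVecLin_apply] at hu
    simp only [Matrix.toLin'_apply]
    rw [← Matrix.mulVec_mulVec, ← Matrix.mulVec_mulVec, ← hu]
    simp only [Matrix.mulVec_mulVec]
    rw [hQ, Matrix.mul_one]
  constructor
  · exact ⟨Qᵀ * W, by rw [← Matrix.mul_assoc, hW]⟩
  · intro F
    -- transpose of the product
    have hPT : Pᵀ = (List.ofFn fun c : Fin p =>
        A * Aᵀ - α c • (1 : Matrix (Fin m) (Fin m) ℝ)).prod := by
      rw [hP, Matrix.transpose_list_prod, List.map_ofFn]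
      have : ((fun M : Matrix (Fin m) (Fin m) ℝ => Mᵀ) ∘ fun c : Fin p =>
          A * Aᵀ - α c.rev • (1 : Matrix (Fin m) (Fin m) ℝ)) = fun c : Fin p =>
          A * Aᵀ - α c.rev • (1 : Matrix (Fin m) (Fin m) ℝ) := by
        funext c
        simp [Matrix.transpose_sub, Matrix.transpose_mul, Matrix.transpose_smul]
      rw [this, ofFn_rev_reverse (fun c : Fin p =>
        A * Aᵀ - α c • (1 : Matrix (Fin m) (Fin m) ℝ))]
    have hWT : Wᵀ = Ωᵀ * Aᵀ * (List.ofFn fun c : Fin p =>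
        A * Aᵀ - α c • (1 : Matrix (Fin m) (Fin m) ℝ)).prod := by
      rw [hWdef, Matrix.transpose_mul, Matrix.transpose_mul, hPT, Matrix.mul_assoc]
    set E := F * (Ωᵀ * Aᵀ * (List.ofFn fun c : Fin p =>
        A * Aᵀ - α c • (1 : Matrix (Fin m) (Fin m) ℝ)).prod) - Aᵀ with hE
    have hET : Eᵀ = W * Fᵀ - A := by
      rw [hE, Matrix.transpose_sub, Matrix.transpose_mul, ← hWT, Matrix.transpose_transpose,
        Matrix.transpose_transpose]
    -- key identity
    have key : Q * Qᵀ * A - A = (1 - Q * Qᵀ) * Eᵀ := by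
      rw [hET, Matrix.sub_mul, Matrix.one_mul, Matrix.mul_sub, ← Matrix.mul_assoc, hW]
      abel
    have hQQ : ‖Q * Qᵀ‖ ≤ 1 := by
      have h1 : ‖Q‖ * ‖Q‖ = ‖(1 : Matrix (Fin l) (Fin l) ℝ)‖ := by
        rw [← Matrix.l2_opNorm_conjTranspose_mul_self Q,
          Matrix.conjTranspose_eq_transpose_of_trivial, hQ]
      have h2 : ‖Q‖ * ‖Q‖ ≤ 1 := h1 ▸ l2_norm_one_le l
      have h3 : ‖Qᵀ‖ = ‖Q‖ := by
        rw [← Matrix.conjTranspose_eq_transpose_of_trivial, Matrix.l2_opNorm_conjTranspose]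
      calc ‖Q * Qᵀ‖ ≤ ‖Q‖ * ‖Qᵀ‖ := Matrix.l2_opNorm_mul Q Qᵀ
        _ = ‖Q‖ * ‖Q‖ := by rw [h3]
        _ ≤ 1 := h2
    have hIQ : ‖(1 : Matrix (Fin m) (Fin m) ℝ) - Q * Qᵀ‖ ≤ 2 := by
      calc ‖(1 : Matrix (Fin m) (Fin m) ℝ) - Q * Qᵀ‖
          ≤ ‖(1 : Matrix (Fin m) (Fin m) ℝ)‖ + ‖Q * Qᵀ‖ := norm_sub_le _ _
        _ ≤ 1 + 1 := add_le_add (l2_norm_one_le m) hQQ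
        _ = 2 := by norm_num
    have hEnorm : ‖Eᵀ‖ = ‖E‖ := by
      rw [← Matrix.conjTranspose_eq_transpose_of_trivial, Matrix.l2_opNorm_conjTranspose]
    calc ‖Q * Qᵀ * A - A‖ = ‖(1 - Q * Qᵀ) * Eᵀ‖ := by rw [key]
      _ ≤ ‖(1 : Matrix (Fin m) (Fin m) ℝ) - Q * Qᵀ‖ * ‖Eᵀ‖ := Matrix.l2_opNorm_mul _ _
      _ ≤ 2 * ‖E‖ := by
          rw [hEnorm]
          exact mul_le_mul_of_nonneg_right hIQ (norm_nonneg E)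
end
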